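/- arXiv:1209.0051 — 7 statements merged into one kernel-verified Lean document; each statement's English description precedes it below -/
import Mathlib

section
/- Let V be a free Z[q,q⁻¹]-module with a pre-canonical structure (bar-involution ψ, sesquilinear pairing ⟨-,-⟩ valued in Z((q⁻¹)) for which ψ is flip-unitary, and standard basis {a_c} indexed by a partially ordered set). Then a canonical basis, i.e. a basis {b_c} such that each b_c is ψ-invariant, b_c ∈ a_c + span_{c'<c} Z[q,q⁻¹]·a_{c'}, and ⟨b_c,b_{c'}⟩ ∈ δ_{c,c'} + q⁻¹Z[[q⁻¹]], is unique if it exists. -/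
/-!
Statement 0: uniqueness of the canonical basis of a pre-canonical structure on a
free `ℤ[q,q⁻¹]`-module.  We realize `ℤ[q,q⁻¹]` as `LaurentPolynomial ℤ` and
`ℤ((q⁻¹))` as `LaurentSeries ℤ`, where the Laurent-series variable `X` stands
for `q⁻¹`.
-/

noncomputable section

open LaurentPolynomial HahnSeries
open scoped Classical

/-- `ℤ[q,q⁻¹]`. -/
abbrev Rq : Type := LaurentPolynomial ℤ

/-- `ℤ((q⁻¹))`, Laurent series in the variable `X = q⁻¹`. -/
abbrev Sq : Type := LaurentSeries ℤ

/-- The bar involution on `ℤ[q,q⁻¹]`, `q ↦ q⁻¹`. -/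
def bar : Rq ≃+* Rq := (LaurentPolynomial.invert (R := ℤ)).toRingEquiv

/-- The monoid homomorphism `qⁿ ↦ X⁻ⁿ ∈ ℤ((q⁻¹))`. -/
def qPow : Multiplicative ℤ →* Sq where
  toFun n := HahnSeries.single (-(Multiplicative.toAdd n)) (1 : ℤ)
  map_one' := by simpa using HahnSeries.single_zero_one
  map_mul' a b := by
    rw [HahnSeries.single_mul_single, mul_one]
    congr 1
    simp [toAdd_mul]
    ring

/-- The canonical embedding `ℤ[q,q⁻¹] → ℤ((q⁻¹))`, sending `q` to `X⁻¹`. -/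
def emb : Rq →+* Sq := (AddMonoidAlgebra.lift ℤ Sq ℤ qPow).toRingHom

/-- `s` lies in `δ + q⁻¹ℤ[[q⁻¹]]`:  with `X = q⁻¹`, the coefficient of `X^0`
is `δ` and all coefficients of negative powers of `X` (positive powers of `q`)
vanish. -/
def DeltaPlusLow (s : Sq) (δ : ℤ) : Prop :=
  s.coeff 0 = δ ∧ ∀ n : ℤ, n < 0 → s.coeff n = 0

variable {C : Type*} [PartialOrder C] {V : Type*} [AddCommGroup V] [Module Rq V]

/-- A pre-canonical structure on a free `ℤ[q,q⁻¹]`-module `V` with standard basis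
indexed by the poset `C`. -/
structure Precanonical (C : Type*) [PartialOrder C] (V : Type*) [AddCommGroup V]
    [Module Rq V] where
  /-- the bar involution `ψ` -/
  ψ : V →+ V
  ψ_invol : ∀ v, ψ (ψ v) = v
  ψ_antilinear : ∀ (r : Rq) (v : V), ψ (r • v) = bar r • ψ v
  /-- the sesquilinear pairing, valued in `ℤ((q⁻¹))` -/
  pair : V →+ V →+ Sq
  pair_sesq_left : ∀ (r : Rq) (u v : V), pair (r • u) v = emb (bar r) * pair u v
  pair_sesq_right : ∀ (r : Rq) (u v : V), pair u (r • v) = emb r * pair u v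
  flip_unitary : ∀ u v : V, pair u v = pair (ψ v) (ψ u)
  /-- the standard basis `{a_c}` -/
  std : Module.Basis C Rq V
  ψ_upper : ∀ c : C,
    ψ (std c) - std c ∈ Submodule.span Rq (std '' {c' : C | c' < c})

/-- `b` is a canonical basis for the pre-canonical structure `P`:
(I) each `b c` is `ψ`-invariant; (II) `b c ∈ a_c + span_{c'<c} ℤ[q,q⁻¹]·a_{c'}`;
(III) almost orthonormality `⟨b_c,b_{c'}⟩ ∈ δ_{c,c'} + q⁻¹ℤ[[q⁻¹]]`. -/
structure IsCanonicalBasis (P : Precanonical C V) (b : Module.Basis C Rq V) : Prop where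
  bar_invariant : ∀ c : C, P.ψ (b c) = b c
  upper_triangular : ∀ c : C,
    b c - P.std c ∈ Submodule.span Rq (P.std '' {c' : C | c' < c})
  almost_orthonormal : ∀ c c' : C,
    DeltaPlusLow (P.pair (b c) (b c')) (if c = c' then 1 else 0)


/-!
Let `d = b c - b' c`. It is `ψ`-invariant and lies in the span of the `a_{c'}` with `c' < c`,
so, `b'` being unitriangular with respect to `a`, its `b'`-coordinates `p_x` are bar-invariant
Laurent polynomials with `p_c = 0`. Let `M` be the largest exponent of `q` occurring in the
`p_x`; bar-invariance forces `M ≥ 0`. By almost orthonormality of `b'`, the coefficient of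
`q^{2M}` in `⟨d, d⟩` is `∑ₓ (coefficient of q^M in p_x)² > 0`. On the other hand
`⟨d, d⟩ = ⟨b_c, b_c⟩ - ⟨b'_c, b'_c⟩ - 2⟨b'_c, d⟩`: the two diagonal terms agree in all
non-negative powers of `q`, and `⟨b'_c, d⟩ = ∑_{x ≠ c} p_x ⟨b'_c, b'_x⟩` only involves powers
below `q^{M}`, so this coefficient vanishes.
-/

theorem bar_coeff (p : Rq) (n : ℤ) : (bar p).coeff n = p.coeff (-n) :=
  LaurentPolynomial.invert_apply p n

theorem emb_coeff (p : Rq) (n : ℤ) : (emb p).coeff n = p.coeff (-n) := by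
  induction p using AddMonoidAlgebra.induction_linear with
  | zero => simp
  | add p q hp hq => simp [hp, hq]
  | single k a =>
    change (AddMonoidAlgebra.lift ℤ Sq ℤ qPow (.single k a)).coeff n = _
    rw [AddMonoidAlgebra.lift_single, Algebra.smul_def,
      show algebraMap ℤ Sq = HahnSeries.C from RingHom.ext_int _ _, HahnSeries.C_apply]
    simp only [qPow, MonoidHom.coe_mk, OneHom.coe_mk, toAdd_ofAdd, HahnSeries.single_mul_single,
      zero_add, mul_one, HahnSeries.coeff_single, AddMonoidAlgebra.coeff_single,
      Finsupp.single_apply, show n = -k ↔ k = -n by omega]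

theorem le_orderTop_emb {p : Rq} {M : ℤ} (hM : ∀ k, p.coeff k ≠ 0 → k ≤ M) :
    ((-M : ℤ) : WithTop ℤ) ≤ (emb p).orderTop := by
  refine le_orderTop_iff_forall.mpr fun j hj => ?_
  have hj : j < -M := by exact_mod_cast hj
  rw [emb_coeff]
  by_contra h
  linarith [hM _ h]

theorem HahnSeries.coeff_mul_of_le_orderTop {Γ R : Type*} [AddCommMonoid Γ] [LinearOrder Γ]
    [IsOrderedCancelAddMonoid Γ] [NonUnitalNonAssocSemiring R] {x y : HahnSeries Γ R} {a b : Γ}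
    (ha : (a : WithTop Γ) ≤ x.orderTop) (hb : (b : WithTop Γ) ≤ y.orderTop) :
    (x * y).coeff (a + b) = x.coeff a * y.coeff b := by
  rw [HahnSeries.coeff_mul, Finset.sum_eq_single (a, b)]
  · rintro ⟨i, j⟩ hij hne
    obtain ⟨hi, hj, hsum⟩ := Finset.mem_antidiagonal.mp hij
    have hai : a ≤ i := WithTop.coe_le_coe.mp (ha.trans (orderTop_le_of_coeff_ne_zero hi))
    have hbj : b ≤ j := WithTop.coe_le_coe.mp (hb.trans (orderTop_le_of_coeff_ne_zero hj))
    obtain rfl | hai := hai.eq_or_lt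
    · obtain rfl | hbj := hbj.eq_or_lt
      · exact absurd rfl hne
      · exact absurd hsum (add_lt_add_right hbj a).ne'
    · exact absurd hsum (add_lt_add_of_lt_of_le hai hbj).ne'
  · intro h
    by_contra hxy
    exact h (Finset.mem_antidiagonal.mpr
      ⟨left_ne_zero_of_mul hxy, right_ne_zero_of_mul hxy, rfl⟩)

theorem DeltaPlusLow.zero_le_orderTop {s : Sq} {δ : ℤ} (h : DeltaPlusLow s δ) :
    (0 : WithTop ℤ) ≤ s.orderTop :=
  HahnSeries.le_orderTop_iff_forall.mpr fun j hj => h.2 j (by exact_mod_cast hj)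

theorem DeltaPlusLow.one_le_orderTop {s : Sq} (h : DeltaPlusLow s 0) :
    (1 : WithTop ℤ) ≤ s.orderTop :=
  HahnSeries.le_orderTop_iff_forall.mpr fun j hj => by
    have hj : j < 1 := by exact_mod_cast hj
    obtain rfl | hj := (show j ≤ 0 by omega).eq_or_lt
    exacts [h.1, h.2 j hj]

theorem DeltaPlusLow.coeff_eq_of_nonpos {s t : Sq} {δ : ℤ} (hs : DeltaPlusLow s δ)
    (ht : DeltaPlusLow t δ) {n : ℤ} (hn : n ≤ 0) : s.coeff n = t.coeff n := by
  obtain rfl | hn := hn.eq_or_lt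
  exacts [hs.1.trans ht.1.symm, (hs.2 n hn).trans (ht.2 n hn).symm]

theorem exists_max_exponent {ι : Type*} (p : ι →₀ Rq) (hp : p ≠ 0) :
    ∃ M : ℤ, (∀ x k, (p x).coeff k ≠ 0 → k ≤ M) ∧ ∃ x, (p x).coeff M ≠ 0 := by
  set S := p.support.biUnion fun x => (p x).coeff.support
  have mem_S {x k} (hk : (p x).coeff k ≠ 0) : k ∈ S := by
    have hx : p x ≠ 0 := by rintro h; simp [h] at hk
    exact Finset.mem_biUnion.mpr
      ⟨x, Finsupp.mem_support_iff.mpr hx, Finsupp.mem_support_iff.mpr hk⟩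
  have hS : S.Nonempty := by
    obtain ⟨x, hx⟩ := Finsupp.support_nonempty_iff.mpr hp
    obtain ⟨k, hk⟩ : (p x).coeff.support.Nonempty := by
      simpa [Finsupp.support_nonempty_iff] using Finsupp.mem_support_iff.mp hx
    exact ⟨k, mem_S (Finsupp.mem_support_iff.mp hk)⟩
  refine ⟨S.max' hS, fun x k hk => S.le_max' k (mem_S hk), ?_⟩
  obtain ⟨x, -, hx⟩ := Finset.mem_biUnion.mp (S.max'_mem hS)
  exact ⟨x, Finsupp.mem_support_iff.mp hx⟩

theorem nonneg_of_bar_eq_self {r : Rq} (hr : bar r = r) {M : ℤ}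
    (hM : ∀ k, r.coeff k ≠ 0 → k ≤ M) (hrM : r.coeff M ≠ 0) : 0 ≤ M := by
  have : -M ≤ M := hM (-M) (by rwa [← bar_coeff, hr])
  omega

section Unitriangular

variable {ι R M : Type*} [PartialOrder ι] [Ring R] [AddCommGroup M] [Module R M]

def IsUnitriangular (a b : Module.Basis ι R M) : Prop :=
  ∀ x, b x - a x ∈ Submodule.span R (a '' {y | y < x})

namespace IsUnitriangular

variable {a b : Module.Basis ι R M}

theorem repr_self (h : IsUnitriangular a b) (y : ι) : a.repr (b y) y = 1 := by
  have : a.repr (b y - a y) y = 0 :=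
    Finsupp.notMem_support_iff.mp fun hy => lt_irrefl y (a.mem_span_image.mp (h y) hy)
  rwa [map_sub, Finsupp.sub_apply, a.repr_self, Finsupp.single_eq_same, sub_eq_zero] at this

theorem le_of_repr_ne_zero (h : IsUnitriangular a b) {x y : ι} (hxy : a.repr (b y) x ≠ 0) :
    x ≤ y := by
  by_cases hx : x = y
  · exact hx.le
  rw [← sub_add_cancel (b y) (a y), map_add, Finsupp.add_apply, a.repr_self,
    Finsupp.single_eq_of_ne hx, add_zero] at hxy
  exact (a.mem_span_image.mp (h y) (Finsupp.mem_support_iff.mpr hxy)).le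

theorem mem_of_repr_ne_zero (h : IsUnitriangular a b) {S : Set ι} (hS : IsLowerSet S) {v : M}
    (hv : v ∈ Submodule.span R (a '' S)) {x : ι} (hx : b.repr v x ≠ 0) : x ∈ S := by
  by_contra hxS
  obtain ⟨m, hm⟩ :=
    ((b.repr v).support.filter (· ∉ S)).exists_maximal ⟨x, by simp [hx, hxS]⟩
  obtain ⟨hvm, hmS⟩ : b.repr v m ≠ 0 ∧ m ∉ S := by simpa using hm.prop
  -- by maximality of `m`, no other `b y` in the expansion of `v` has an `a_m`-component
  have hav : a.repr v m = b.repr v m := by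
    conv_lhs => rw [← b.linearCombination_repr v]
    rw [Finsupp.linearCombination_apply, map_finsuppSum, Finsupp.sum_apply, Finsupp.sum,
      Finset.sum_eq_single m]
    · simp [h.repr_self]
    · intro y hy hym
      rw [map_smul, Finsupp.smul_apply, smul_eq_mul]
      by_contra hne
      have hmy : m < y := (h.le_of_repr_ne_zero (right_ne_zero_of_mul hne)).lt_of_ne' hym
      exact hm.not_gt (by simpa [hy] using fun hyS => hmS (hS hmy.le hyS)) hmy
    · intro hm'
      simp [Finsupp.notMem_support_iff.mp hm']
  exact hvm (hav ▸ Finsupp.notMem_support_iff.mp fun hm' => hmS (a.mem_span_image.mp hv hm'))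

end IsUnitriangular

end Unitriangular

namespace Precanonical

variable (P : Precanonical C V)

def IsAlmostOrthonormal (b : Module.Basis C Rq V) : Prop :=
  ∀ x z, DeltaPlusLow (P.pair (b x) (b z)) (if x = z then 1 else 0)

theorem repr_ψ {ι : Type*} (b : Module.Basis ι Rq V) (hb : ∀ x, P.ψ (b x) = b x) (v : V) :
    b.repr (P.ψ v) = Finsupp.mapRange bar (map_zero bar) (b.repr v) := by
  have : P.ψ v = Finsupp.linearCombination Rq b
      (Finsupp.mapRange bar (map_zero bar) (b.repr v)) := by
    conv_lhs => rw [← b.linearCombination_repr v]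
    simp only [Finsupp.linearCombination_apply, map_finsuppSum, P.ψ_antilinear, hb]
    exact (Finsupp.sum_mapRange_index (h := fun i r => r • b i) fun i => zero_smul Rq (b i)).symm
  rw [this, b.repr_linearCombination]

theorem bar_repr_eq_self {ι : Type*} (b : Module.Basis ι Rq V) (hb : ∀ x, P.ψ (b x) = b x)
    {v : V} (hv : P.ψ v = v) (x : ι) : bar (b.repr v x) = b.repr v x := by
  simpa [hv] using (DFunLike.congr_fun (P.repr_ψ b hb v) x).symm

theorem pair_linearCombination_left {ι : Type*} (u : ι → V) (p : ι →₀ Rq) (v : V) :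
    P.pair (Finsupp.linearCombination Rq u p) v
      = ∑ x ∈ p.support, emb (bar (p x)) * P.pair (u x) v := by
  rw [Finsupp.linearCombination_apply, Finsupp.sum, map_sum, AddMonoidHom.finsetSum_apply]
  simp only [P.pair_sesq_left]

theorem pair_linearCombination_right {ι : Type*} (u : ι → V) (p : ι →₀ Rq) (v : V) :
    P.pair v (Finsupp.linearCombination Rq u p)
      = ∑ z ∈ p.support, emb (p z) * P.pair v (u z) := by
  rw [Finsupp.linearCombination_apply, Finsupp.sum, map_sum]
  simp only [P.pair_sesq_right]

theorem pair_comm_of_ψ_eq {u v : V} (hu : P.ψ u = u) (hv : P.ψ v = v) :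
    P.pair u v = P.pair v u := by
  rw [P.flip_unitary, hu, hv]

theorem pair_sub_self {u v : V} (hu : P.ψ u = u) (hv : P.ψ v = v) :
    P.pair (u - v) (u - v) = P.pair u u - P.pair v v - 2 • P.pair v (u - v) := by
  simp only [map_sub, AddMonoidHom.sub_apply, P.pair_comm_of_ψ_eq hu hv]
  abel

variable {P} {b : Module.Basis C Rq V}

theorem coeff_pair_linearCombination_self (hb : P.IsAlmostOrthonormal b) {p : C →₀ Rq}
    (hp : ∀ x, bar (p x) = p x) {M : ℤ} (hM : ∀ x k, (p x).coeff k ≠ 0 → k ≤ M) :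
    (P.pair (Finsupp.linearCombination Rq b p) (Finsupp.linearCombination Rq b p)).coeff (-M + -M)
      = ∑ x ∈ p.support, (p x).coeff M * (p x).coeff M := by
  have hterm : ∀ x z, (emb (p x) * (emb (p z) * P.pair (b x) (b z))).coeff (-M + -M)
      = if x = z then (p x).coeff M * (p z).coeff M else 0 := by
    intro x z
    rw [show -M + -M = -M + (-M + 0) by ring,
      coeff_mul_of_le_orderTop (le_orderTop_emb (hM x)),
      coeff_mul_of_le_orderTop (le_orderTop_emb (hM z)) (hb x z).zero_le_orderTop,
      emb_coeff, emb_coeff, (hb x z).1]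
    · split_ifs <;> simp
    · exact (add_le_add (le_orderTop_emb (hM z)) (hb x z).zero_le_orderTop).trans
        orderTop_add_le_mul
  rw [pair_linearCombination_left, HahnSeries.coeff_sum]
  refine Finset.sum_congr rfl fun x hx => ?_
  rw [hp, pair_linearCombination_right, Finset.mul_sum, HahnSeries.coeff_sum]
  simp only [hterm, Finset.sum_ite_eq, if_pos hx]

theorem coeff_pair_linearCombination_eq_zero (hb : P.IsAlmostOrthonormal b) {p : C →₀ Rq}
    {c : C} (hpc : p c = 0) {M : ℤ} (hM : ∀ x k, (p x).coeff k ≠ 0 → k ≤ M) {n : ℤ}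
    (hn : n < -M + 1) : (P.pair (b c) (Finsupp.linearCombination Rq b p)).coeff n = 0 := by
  rw [pair_linearCombination_right, HahnSeries.coeff_sum]
  refine Finset.sum_eq_zero fun z hz => coeff_eq_zero_of_lt_orderTop ?_
  have hcz : c ≠ z := by rintro rfl; exact Finsupp.mem_support_iff.mp hz hpc
  have hcz' : DeltaPlusLow (P.pair (b c) (b z)) 0 := by simpa only [if_neg hcz] using hb c z
  exact lt_of_lt_of_le (by exact_mod_cast hn)
    ((add_le_add (le_orderTop_emb (hM z)) hcz'.one_le_orderTop).trans orderTop_add_le_mul)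

end Precanonical

/-- A pre-canonical structure has at most one canonical basis. -/
theorem canonical_basis_unique (P : Precanonical C V) (b b' : Module.Basis C Rq V)
    (hb : IsCanonicalBasis P b) (hb' : IsCanonicalBasis P b') :
    ∀ c : C, b c = b' c := by
  intro c
  by_contra hne
  set p := b'.repr (b c - b' c)
  have hd : Finsupp.linearCombination Rq b' p = b c - b' c := b'.linearCombination_repr _
  have hp : p ≠ 0 := b'.repr.map_ne_zero_iff.mpr (sub_ne_zero.mpr hne)
  have hpc : p c = 0 := by
    have hspan := Submodule.sub_mem _ (hb.upper_triangular c) (hb'.upper_triangular c)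
    rw [sub_sub_sub_cancel_right] at hspan
    by_contra h
    exact lt_irrefl c (IsUnitriangular.mem_of_repr_ne_zero hb'.upper_triangular
      (isLowerSet_Iio c) hspan h)
  have hψ : P.ψ (b c - b' c) = b c - b' c := by
    rw [map_sub, hb.bar_invariant, hb'.bar_invariant]
  have hbar : ∀ x, bar (p x) = p x := P.bar_repr_eq_self b' hb'.bar_invariant hψ
  obtain ⟨M, hM, x₀, hx₀⟩ := exists_max_exponent p hp
  have hM₀ : 0 ≤ M := nonneg_of_bar_eq_self (hbar x₀) (hM x₀) hx₀
  have hpos : 0 < ∑ x ∈ p.support, (p x).coeff M * (p x).coeff M :=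
    Finset.sum_pos' (fun x _ => mul_self_nonneg _)
      ⟨x₀, Finsupp.mem_support_iff.mpr fun h => hx₀ (by simp [h]), mul_self_pos.mpr hx₀⟩
  have hcross : (P.pair (b' c) (b c - b' c)).coeff (-M + -M) = 0 := by
    rw [← hd]
    exact Precanonical.coeff_pair_linearCombination_eq_zero hb'.almost_orthonormal hpc hM
      (by omega)
  have hdiag : (P.pair (b c) (b c)).coeff (-M + -M) = (P.pair (b' c) (b' c)).coeff (-M + -M) :=
    (hb.almost_orthonormal c c).coeff_eq_of_nonpos (hb'.almost_orthonormal c c) (by omega)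
  rw [← Precanonical.coeff_pair_linearCombination_self hb'.almost_orthonormal hbar hM, hd,
    P.pair_sub_self (hb.bar_invariant c) (hb'.bar_invariant c), coeff_sub, coeff_sub,
    coeff_smul, hcross, hdiag, sub_self, smul_zero, sub_zero] at hpos
  exact lt_irrefl 0 hpos

end
end

section
/- Let V be a finitely generated free Z[q,q⁻¹]-module with a pre-canonical structure possessing a canonical basis {b_c}. If v ∈ V satisfies ψ(v) = v and ⟨v,v⟩ ∈ 1 + q⁻¹Z[q⁻¹], then either v or -v is a canonical basis vector. -/
/-!
Statement 1: if `V` is a finitely generated free `ℤ[q,q⁻¹]`-module with a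
pre-canonical structure possessing a canonical basis `{b_c}`, and `v ∈ V`
satisfies `ψ(v) = v` and `⟨v,v⟩ ∈ 1 + q⁻¹ℤ[q⁻¹]`, then `v` or `-v` is a
canonical basis vector.  Here `ℤ[q,q⁻¹] = LaurentPolynomial ℤ` and
`ℤ((q⁻¹)) = LaurentSeries ℤ`, the Laurent-series variable `X` standing for `q⁻¹`.
-/

noncomputable section

open LaurentPolynomial HahnSeries
open scoped Classical

variable {C : Type*} [PartialOrder C] {V : Type*} [AddCommGroup V] [Module Rq V]

/-!
Write `v = ∑ f_c b_c`. Since `ψ` fixes `v` and every `b_c`, each `f_c` is bar invariant, i.e. its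
coefficients are symmetric under `n ↦ -n`. If `M` bounds the degrees of all `f_c`, then in
`q^{-2M} ⟨v,v⟩ = ∑ (q^{-M} f_c)(q^{-M} f_{c'}) ⟨b_c,b_{c'}⟩` every factor is a power series in `q⁻¹`,
so by almost orthonormality the coefficient of `q^{2M}` in `⟨v,v⟩` is `∑_c (coefficient of q^M in f_c)²`.
For `M > 0` that coefficient of `⟨v,v⟩` is `0`, so the `f_c` are integer constants `a_c` with
`∑ a_c² = 1`.
-/

lemma emb_single (n a : ℤ) : emb (.single n a) = HahnSeries.single (-n) a := by
  change AddMonoidAlgebra.lift ℤ Sq ℤ qPow (AddMonoidAlgebra.single n a) = _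
  rw [AddMonoidAlgebra.lift_single, Algebra.smul_def, eq_intCast, ← HahnSeries.single_zero_intCast]
  simp [qPow, HahnSeries.single_mul_single]

lemma emb_T (n : ℤ) : emb (T n) = HahnSeries.single (-n) 1 := emb_single n 1

lemma coeff_emb (r : Rq) (m : ℤ) : (emb r).coeff m = r.coeff (-m) := by
  induction r using LaurentPolynomial.induction_on' with
  | add p q hp hq => simp only [map_add, HahnSeries.coeff_add, hp, hq]; rfl
  | C_mul_T n a =>
    rw [← single_eq_C_mul_T, emb_single, HahnSeries.coeff_single, AddMonoidAlgebra.coeff_single,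
      Finsupp.single_apply]
    simp_rw [eq_neg_iff_add_eq_zero, add_comm m]

lemma coeff_emb_T_mul (n : ℤ) (x : Sq) (m : ℤ) : (emb (T n) * x).coeff m = x.coeff (m + n) := by
  simpa [emb_T] using HahnSeries.coeff_single_mul_add (r := (1 : ℤ)) (x := x) (a := m + n) (b := -n)

lemma coeff_bar (r : Rq) (n : ℤ) : (bar r).coeff n = r.coeff (-n) :=
  invert_apply r n

lemma LaurentPolynomial.eq_C_of_coeff_eq_zero {R : Type*} [Semiring R] {p : R[T;T⁻¹]}
    (hp : ∀ n ≠ 0, p.coeff n = 0) : p = LaurentPolynomial.C (p.coeff 0) := by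
  ext n
  rw [C_apply]
  split_ifs with hn
  · rw [hn]
  · exact hp n hn

lemma LaurentPolynomial.exists_max_coeff_ne_zero {ι R : Type*} [Fintype ι] [Semiring R]
    (f : ι → R[T;T⁻¹]) {i₀ : ι} {n₀ : ℤ} (h : (f i₀).coeff n₀ ≠ 0) :
    ∃ M, n₀ ≤ M ∧ (∀ i n, M < n → (f i).coeff n = 0) ∧ ∃ i, (f i).coeff M ≠ 0 := by
  set S := Finset.univ.biUnion fun i => (f i).coeff.support
  have hmem : ∀ i n, (f i).coeff n ≠ 0 → n ∈ S := fun i n hn =>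
    Finset.mem_biUnion.mpr ⟨i, Finset.mem_univ i, Finsupp.mem_support_iff.mpr hn⟩
  have hS : S.Nonempty := ⟨n₀, hmem i₀ n₀ h⟩
  obtain ⟨i, -, hi⟩ := Finset.mem_biUnion.mp (S.max'_mem hS)
  refine ⟨S.max' hS, S.le_max' n₀ (hmem i₀ n₀ h), fun j n hn => ?_, i, Finsupp.mem_support_iff.mp hi⟩
  by_contra hne
  exact (S.le_max' n (hmem j n hne)).not_gt hn

lemma LaurentSeries.exists_coe_powerSeries_of_coeff_neg {R : Type*} [Semiring R]
    {x : LaurentSeries R} (hx : ∀ n < 0, x.coeff n = 0) :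
    ∃ p : PowerSeries R, (p : LaurentSeries R) = x := by
  refine ⟨PowerSeries.mk fun n => x.coeff n, ?_⟩
  ext n
  rw [PowerSeries.coeff_coe]
  split_ifs with hn
  · exact (hx n hn).symm
  · rw [PowerSeries.coeff_mk, Int.natAbs_of_nonneg (not_lt.mp hn)]

lemma LaurentSeries.coeff_mul_eq_zero_of_coeff_neg {R : Type*} [Semiring R]
    {x y : LaurentSeries R} (hx : ∀ n < 0, x.coeff n = 0) (hy : ∀ n < 0, y.coeff n = 0) :
    ∀ n < 0, (x * y).coeff n = 0 := by
  obtain ⟨p, rfl⟩ := exists_coe_powerSeries_of_coeff_neg hx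
  obtain ⟨q, rfl⟩ := exists_coe_powerSeries_of_coeff_neg hy
  intro n hn
  rw [← map_mul, PowerSeries.coeff_coe, if_pos hn]

lemma LaurentSeries.coeff_zero_mul_of_coeff_neg {R : Type*} [Semiring R]
    {x y : LaurentSeries R} (hx : ∀ n < 0, x.coeff n = 0) (hy : ∀ n < 0, y.coeff n = 0) :
    (x * y).coeff 0 = x.coeff 0 * y.coeff 0 := by
  obtain ⟨p, rfl⟩ := exists_coe_powerSeries_of_coeff_neg hx
  obtain ⟨q, rfl⟩ := exists_coe_powerSeries_of_coeff_neg hy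
  have hcoeff0 (r : PowerSeries R) :
      (r : LaurentSeries R).coeff 0 = PowerSeries.constantCoeff r := by
    rw [PowerSeries.coeff_coe, if_neg (lt_irrefl 0), Int.natAbs_zero,
      PowerSeries.coeff_zero_eq_constantCoeff_apply]
  rw [← map_mul, hcoeff0, hcoeff0, hcoeff0, map_mul]

lemma Int.exists_eq_one_or_neg_one_of_sum_sq_eq_one {ι : Type*} [Fintype ι] {a : ι → ℤ}
    (h : ∑ i, a i ^ 2 = 1) : ∃ i, (a i = 1 ∨ a i = -1) ∧ ∀ j ≠ i, a j = 0 := by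
  obtain ⟨i, hi⟩ : ∃ i, a i ≠ 0 := by
    by_contra! h0
    simp [h0] at h
  have hsplit := Finset.add_sum_erase Finset.univ (fun j => a j ^ 2) (Finset.mem_univ i)
  have hrest : 0 ≤ ∑ j ∈ Finset.univ.erase i, a j ^ 2 := Finset.sum_nonneg fun j _ => sq_nonneg _
  have hai : a i ^ 2 = 1 := by
    have : 0 < a i ^ 2 := by positivity
    omega
  refine ⟨i, sq_eq_one_iff.mp hai, fun j hj => ?_⟩
  have hzero : ∑ j ∈ Finset.univ.erase i, a j ^ 2 = 0 := by omega
  rw [Finset.sum_eq_zero_iff_of_nonneg fun j _ => sq_nonneg _] at hzero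
  exact pow_eq_zero_iff two_ne_zero |>.mp (hzero j (Finset.mem_erase.mpr ⟨hj, Finset.mem_univ j⟩))

lemma Precanonical.pair_sum_smul (P : Precanonical C V) {ι : Type*} [Fintype ι] (e : ι → V)
    (f g : ι → Rq) :
    P.pair (∑ i, f i • e i) (∑ j, g j • e j) =
      ∑ i, ∑ j, emb (bar (f i)) * emb (g j) * P.pair (e i) (e j) := by
  simp only [map_sum, AddMonoidHom.finsetSum_apply, P.pair_sesq_left, P.pair_sesq_right, mul_assoc]
  rw [Finset.sum_comm]

namespace IsCanonicalBasis

variable [Fintype C] {P : Precanonical C V} {b : Module.Basis C Rq V}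

lemma repr_ψ (hb : IsCanonicalBasis P b) (v : V) (c : C) :
    b.repr (P.ψ v) c = bar (b.repr v c) := by
  conv_lhs => rw [← b.sum_repr v, map_sum]
  simp only [P.ψ_antilinear, hb.bar_invariant, b.repr_sum_self]

lemma coeff_pair_self (hb : IsCanonicalBasis P b) {v : V} (hv : P.ψ v = v) {M : ℤ}
    (hM : ∀ c n, M < n → (b.repr v c).coeff n = 0) :
    (P.pair v v).coeff (-(M + M)) = ∑ c, (b.repr v c).coeff M ^ 2 := by
  set g : C → Sq := fun c => emb (T (-M)) * emb (b.repr v c)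
  have hg_neg (c : C) : ∀ m < 0, (g c).coeff m = 0 := fun m hm => by
    rw [coeff_emb_T_mul, coeff_emb]
    exact hM c _ (by omega)
  have hg_zero (c : C) : (g c).coeff 0 = (b.repr v c).coeff M := by
    rw [coeff_emb_T_mul, coeff_emb, zero_add, neg_neg]
  have hexpand :
      emb (T (-(M + M))) * P.pair v v = ∑ c, ∑ c', g c * g c' * P.pair (b c) (b c') := by
    conv_lhs => rw [← b.sum_repr v]
    rw [P.pair_sum_smul, Finset.mul_sum]
    refine Finset.sum_congr rfl fun c _ => ?_
    rw [Finset.mul_sum]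
    refine Finset.sum_congr rfl fun c' _ => ?_
    rw [← hb.repr_ψ, hv, neg_add, T_add, map_mul]
    ring
  calc (P.pair v v).coeff (-(M + M))
      = (emb (T (-(M + M))) * P.pair v v).coeff 0 := by rw [coeff_emb_T_mul, zero_add]
    _ = ∑ c, ∑ c', (g c).coeff 0 * (g c').coeff 0 * (P.pair (b c) (b c')).coeff 0 := by
      simp only [hexpand, HahnSeries.coeff_sum]
      refine Finset.sum_congr rfl fun c _ => Finset.sum_congr rfl fun c' _ => ?_
      rw [LaurentSeries.coeff_zero_mul_of_coeff_neg
          (LaurentSeries.coeff_mul_eq_zero_of_coeff_neg (hg_neg c) (hg_neg c'))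
          (hb.almost_orthonormal c c').2,
        LaurentSeries.coeff_zero_mul_of_coeff_neg (hg_neg c) (hg_neg c')]
    _ = ∑ c, (b.repr v c).coeff M ^ 2 := by
      simp [hg_zero, (hb.almost_orthonormal _ _).1, sq]

lemma coeff_repr_eq_zero_of_pos (hb : IsCanonicalBasis P b) {v : V} (hv : P.ψ v = v)
    (hneg : ∀ n < 0, (P.pair v v).coeff n = 0) (c : C) {n : ℤ} (hn : 0 < n) :
    (b.repr v c).coeff n = 0 := by
  by_contra hne
  obtain ⟨M, hnM, htop, c₁, hc₁⟩ := LaurentPolynomial.exists_max_coeff_ne_zero (b.repr v ·) hne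
  have hsum := hb.coeff_pair_self hv htop
  rw [hneg _ (by omega), eq_comm, Finset.sum_eq_zero_iff_of_nonneg fun _ _ => sq_nonneg _] at hsum
  exact hc₁ (pow_eq_zero_iff two_ne_zero |>.mp (hsum c₁ (Finset.mem_univ c₁)))

lemma repr_eq_C (hb : IsCanonicalBasis P b) {v : V} (hv : P.ψ v = v)
    (hneg : ∀ n < 0, (P.pair v v).coeff n = 0) (c : C) :
    b.repr v c = LaurentPolynomial.C ((b.repr v c).coeff 0) := by
  refine LaurentPolynomial.eq_C_of_coeff_eq_zero fun n hn => ?_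
  rcases hn.lt_or_gt with hn | hn
  · rw [← neg_neg n, ← coeff_bar, ← hb.repr_ψ, hv]
    exact hb.coeff_repr_eq_zero_of_pos hv hneg c (by omega)
  · exact hb.coeff_repr_eq_zero_of_pos hv hneg c hn

end IsCanonicalBasis

theorem canonical_sign_general [Fintype C] (P : Precanonical C V) (b : Module.Basis C Rq V)
    (hb : IsCanonicalBasis P b) (v : V)
    (hbar : P.ψ v = v)
    (hcoeff0 : (P.pair v v).coeff 0 = 1)
    (hneg : ∀ n : ℤ, n < 0 → (P.pair v v).coeff n = 0) :
    ∃ c : C, v = b c ∨ v = - b c := by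
  set a : C → ℤ := fun c => (b.repr v c).coeff 0
  have hsq : ∑ c, a c ^ 2 = 1 := by
    simpa [hcoeff0] using (hb.coeff_pair_self hbar (M := 0)
      fun c n hn => hb.coeff_repr_eq_zero_of_pos hbar hneg c hn).symm
  obtain ⟨c, hc, hzero⟩ := Int.exists_eq_one_or_neg_one_of_sum_sq_eq_one hsq
  have hv : v = a c • b c :=
    calc v = ∑ c', a c' • b c' := by
          conv_lhs => rw [← b.sum_repr v]
          refine Finset.sum_congr rfl fun c' _ => ?_
          rw [← algebraMap_smul Rq (a c'), ← LaurentPolynomial.C_eq_algebraMap,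
            ← hb.repr_eq_C hbar hneg]
      _ = a c • b c := Finset.sum_eq_single_of_mem c (Finset.mem_univ c)
          fun c' _ hc' => by rw [hzero c' hc', zero_smul]
  rcases hc with h | h
  · exact ⟨c, Or.inl (by rw [hv, h, one_zsmul])⟩
  · exact ⟨c, Or.inr (by rw [hv, h, neg_one_zsmul])⟩

/-- If `V` is finitely generated (the index set `C` is finite),
`b` is a canonical basis, `ψ(v) = v`, and `⟨v,v⟩ ∈ 1 + q⁻¹ℤ[q⁻¹]`
(coefficient of `q⁰` is `1`, no positive powers of `q`, and finitely many
nonzero coefficients), then `v` or `-v` is a canonical basis vector. -/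
theorem canonical_sign [Fintype C] (P : Precanonical C V) (b : Module.Basis C Rq V)
    (hb : IsCanonicalBasis P b) (v : V)
    (hbar : P.ψ v = v)
    (hcoeff0 : (P.pair v v).coeff 0 = 1)
    (hneg : ∀ n : ℤ, n < 0 → (P.pair v v).coeff n = 0)
    (hpoly : (Function.support (P.pair v v).coeff).Finite) :
    ∃ c : C, v = b c ∨ v = - b c :=
  canonical_sign_general P b hb v hbar hcoeff0 hneg
end
end

section
/- If f₁,...,f_n ∈ Z[q,q⁻¹] are Laurent polynomials invariant under the bar involution q ↦ q⁻¹, and Σᵢ fᵢ² ∈ 1 + q⁻¹Z[q⁻¹], then exactly one fᵢ equals ±1 and all others are zero. -/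
/-!
For bar-invariant `f` the constant term of `f² = f · f̄` is the sum of the squares of the
coefficients of `f`. So the constant-term condition says that these nonnegative integers, one
for each `fᵢ`, add up to `1`: one `fᵢ` has a single nonzero coefficient, equal to `±1`, and the
others vanish. Bar invariance puts that coefficient in degree `0`.
-/

noncomputable section

open LaurentPolynomial

theorem Finset.exists_eq_one_of_sum_eq_one {ι : Type*} {s : Finset ι} {x : ι → ℤ}
    (hx : ∀ i ∈ s, 0 ≤ x i) (h : ∑ i ∈ s, x i = 1) :
    ∃ i ∈ s, x i = 1 ∧ ∀ j ∈ s, j ≠ i → x j = 0 := by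
  classical
  obtain ⟨i, hi, hxi⟩ : ∃ i ∈ s, x i ≠ 0 := by
    by_contra! h0
    simp [Finset.sum_eq_zero h0] at h
  have hle : x i ≤ 1 := h ▸ Finset.single_le_sum hx hi
  have hone : x i = 1 := by have := hx i hi; omega
  have hrest : ∑ j ∈ s.erase i, x j = 0 := by
    have := Finset.add_sum_erase s x hi
    omega
  refine ⟨i, hi, hone, fun j hj hji ↦ ?_⟩
  exact (Finset.sum_eq_zero_iff_of_nonneg fun k hk ↦ hx k (Finset.mem_of_mem_erase hk)).mp hrest j
    (Finset.mem_erase.mpr ⟨hji, hj⟩)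

namespace Finsupp

variable {α R : Type*}

theorem sum_sq_nonneg [Ring R] [LinearOrder R] [IsStrictOrderedRing R] (x : α →₀ R) :
    0 ≤ x.sum fun _ r ↦ r ^ 2 :=
  Finset.sum_nonneg fun _ _ ↦ sq_nonneg _

theorem sum_sq_eq_zero_iff [Ring R] [LinearOrder R] [IsStrictOrderedRing R] {x : α →₀ R} :
    (x.sum fun _ r ↦ r ^ 2) = 0 ↔ x = 0 := by
  refine ⟨fun h ↦ ?_, fun h ↦ by simp [h]⟩
  ext a
  by_contra ha
  have := (Finset.sum_eq_zero_iff_of_nonneg fun _ _ ↦ sq_nonneg _).mp h a (mem_support_iff.mpr ha)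
  exact ha (pow_eq_zero_iff two_ne_zero |>.mp this)

theorem exists_eq_single_of_sum_sq_eq_one {x : α →₀ ℤ} (h : (x.sum fun _ r ↦ r ^ 2) = 1) :
    ∃ a, x a ^ 2 = 1 ∧ x = single a (x a) := by
  obtain ⟨a, -, ha, hrest⟩ :=
    Finset.exists_eq_one_of_sum_eq_one (fun _ _ ↦ sq_nonneg _) h
  refine ⟨a, ha, ?_⟩
  ext b
  rcases eq_or_ne b a with rfl | hb
  · simp
  · rw [single_eq_of_ne hb]
    by_contra hxb
    exact hxb (pow_eq_zero_iff two_ne_zero |>.mp (hrest b (mem_support_iff.mpr hxb) hb))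

end Finsupp

namespace LaurentPolynomial

variable {R : Type*}

theorem coeff_zero_mul_invert [CommSemiring R] (f g : R[T;T⁻¹]) :
    (f * invert g).coeff 0 = f.coeff.sum fun a r ↦ r * g.coeff a := by
  simp [AddMonoidAlgebra.coeff_mul_apply_left]

theorem coeff_zero_sq_of_invert_eq [CommSemiring R] {f : R[T;T⁻¹]} (hf : invert f = f) :
    (f ^ 2).coeff 0 = f.coeff.sum fun _ r ↦ r ^ 2 := by
  conv_lhs => rw [sq, ← hf, coeff_zero_mul_invert, hf]
  simp only [Finsupp.sum, sq]

theorem eq_one_or_eq_neg_one_of_invert_eq {f : ℤ[T;T⁻¹]} (hf : invert f = f)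
    (h : (f.coeff.sum fun _ r ↦ r ^ 2) = 1) : f = 1 ∨ f = -1 := by
  obtain ⟨a, ha, hfa⟩ := Finsupp.exists_eq_single_of_sum_sq_eq_one h
  have ha0 : a = 0 := by
    have hsym := congrArg (fun g : ℤ[T;T⁻¹] ↦ g.coeff (-a)) hf
    simp only [invert_apply, neg_neg] at hsym
    rw [hfa, Finsupp.single_eq_same, Finsupp.single_apply] at hsym
    split_ifs at hsym with hneg
    · omega
    · simp [hsym] at ha
  subst ha0
  have hf0 : f = C (f.coeff 0) := AddMonoidAlgebra.coeff_injective hfa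
  rw [hf0]
  rcases sq_eq_one_iff.mp ha with h1 | h1 <;> simp [h1]

end LaurentPolynomial

theorem sum_of_squares_of_bar_invariant_general (n : ℕ) (f : Fin n → Rq)
    (hbar : ∀ i, bar (f i) = f i)
    (hconst : (∑ i, (f i) ^ 2).coeff 0 = 1) :
    ∃ i, (f i = 1 ∨ f i = -1) ∧ ∀ j, j ≠ i → f j = 0 := by
  have hnorm : ∑ i, ((f i).coeff.sum fun _ r ↦ r ^ 2) = 1 := by
    rw [← hconst, AddMonoidAlgebra.coeff_sum, Finsupp.finsetSum_apply]
    exact Finset.sum_congr rfl fun i _ ↦ (coeff_zero_sq_of_invert_eq (hbar i)).symm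
  obtain ⟨i, -, hi, hj⟩ :=
    Finset.exists_eq_one_of_sum_eq_one (fun i _ ↦ Finsupp.sum_sq_nonneg (f i).coeff) hnorm
  refine ⟨i, eq_one_or_eq_neg_one_of_invert_eq (hbar i) hi, fun j hji ↦ ?_⟩
  exact AddMonoidAlgebra.coeff_eq_zero.mp
    (Finsupp.sum_sq_eq_zero_iff.mp (hj j (Finset.mem_univ j) hji))

theorem sum_of_squares_of_bar_invariant (n : ℕ) (f : Fin n → Rq)
    (hbar : ∀ i, bar (f i) = f i)
    (hconst : (∑ i, (f i) ^ 2).coeff 0 = 1)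
    (hpos : ∀ k : ℤ, 0 < k → (∑ i, (f i) ^ 2).coeff k = 0) :
    ∃ i, (f i = 1 ∨ f i = -1) ∧ ∀ j, j ≠ i → f j = 0 :=
  sum_of_squares_of_bar_invariant_general n f hbar hconst

end
end

section
/- Suppose a pre-canonical structure on a free Z[q,q⁻¹]-module V is almost balanced, meaning ⟨ψ(a_c),a_d⟩ ∈ δ_{c,d} + q⁻¹Z[[q⁻¹]]. Then for a family {b_c} satisfying condition (I) (ψ-invariance), conditions (II) and (III) together are equivalent to condition (II'): b_c ∈ a_c + Σ_{c'<c} q⁻¹Z[q⁻¹]·a_{c'}. -/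
/-!
Statement 3: for an almost balanced pre-canonical structure on a free
`ℤ[q,q⁻¹]`-module, and a `ψ`-invariant basis `{b_c}`, conditions (II)+(III)
are together equivalent to condition (II').  Conventions as in the other files:
`ℤ[q,q⁻¹] = LaurentPolynomial ℤ`, `ℤ((q⁻¹)) = LaurentSeries ℤ` with the
Laurent-series variable standing for `q⁻¹`.
-/

noncomputable section

open LaurentPolynomial HahnSeries
open scoped Classical

variable {C : Type*} [PartialOrder C] {V : Type*} [AddCommGroup V] [Module Rq V]

/-- The pre-canonical structure is almost balanced:
`⟨ψ(a_c), a_d⟩ ∈ δ_{c,d} + q⁻¹ℤ[[q⁻¹]]`. -/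
def AlmostBalanced (P : Precanonical C V) : Prop :=
  ∀ c d : C, DeltaPlusLow (P.pair (P.ψ (P.std c)) (P.std d)) (if c = d then 1 else 0)

/-- Condition (II): `b_c ∈ a_c + Σ_{c'<c} ℤ[q,q⁻¹]·a_{c'}`. -/
def CondII (P : Precanonical C V) (b : Module.Basis C Rq V) : Prop :=
  ∀ c : C, b c - P.std c ∈ Submodule.span Rq (P.std '' {c' : C | c' < c})

/-- Condition (III): `⟨b_c, b_{c'}⟩ ∈ δ_{c,c'} + q⁻¹ℤ[[q⁻¹]]`. -/
def CondIII (P : Precanonical C V) (b : Module.Basis C Rq V) : Prop :=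
  ∀ c c' : C, DeltaPlusLow (P.pair (b c) (b c')) (if c = c' then 1 else 0)

/-- Condition (II'): `b_c ∈ a_c + Σ_{c'<c} q⁻¹ℤ[q⁻¹]·a_{c'}`, expressed in terms
of the coordinates of `b_c` in the standard basis: the coordinate at `c` is `1`,
nonzero coordinates at `c' ≠ c` occur only for `c' < c`, and those coordinates
are Laurent polynomials with vanishing coefficients in degrees `≥ 0`. -/
def CondII' (P : Precanonical C V) (b : Module.Basis C Rq V) : Prop :=
  ∀ c : C, (P.std.repr (b c)) c = 1 ∧
    ∀ c' : C, c' ≠ c →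
      ((P.std.repr (b c)) c' ≠ 0 → c' < c) ∧
      (∀ k : ℤ, 0 ≤ k → AddMonoidAlgebra.coeff ((P.std.repr (b c)) c') k = 0)

/-!
Write `b_c = ∑ p_{c,c'} a_{c'}`. Because `ψ b_c = b_c` and the bars coming from `ψ` and from the
first slot of the pairing cancel, `⟨b_c, b_d⟩ = ∑_{c',d'} p_{c,c'} p_{d,d'} ⟨ψ a_{c'}, a_{d'}⟩`,
and by almost balancedness the Gram matrix `⟨ψ a_{c'}, a_{d'}⟩` is the identity modulo
`q⁻¹ℤ[[q⁻¹]]`.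

Under (II') every factor lies in `ℤ[[q⁻¹]]` and reduces to a Kronecker delta, which gives (III).
Conversely, assume (II) and (III), and let `(q⁻¹)^n` be the lowest power of `q⁻¹` occurring in the
`p_{c,c'}` with `c' ≠ c`; if (II') fails, `n ≤ 0`. The coefficient of `(q⁻¹)^{2n}` in `⟨b_c, b_c⟩`
is then the sum of the squares of the `(q⁻¹)^n`-coefficients of all `p_{c,c'}`, and (III) says it
equals the contribution of `p_{c,c} = 1` alone. So these integer squares vanish for `c' ≠ c`,
contradicting the choice of `n`.
-/

namespace HahnSeries

variable {Γ R : Type*} [AddCommMonoid Γ] [LinearOrder Γ] [IsOrderedCancelAddMonoid Γ]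
  [NonUnitalNonAssocSemiring R]

theorem coeff_mul_add_of_le_orderTop {x y : R⟦Γ⟧} {a b : Γ} (ha : ↑a ≤ x.orderTop)
    (hb : ↑b ≤ y.orderTop) : (x * y).coeff (a + b) = x.coeff a * y.coeff b := by
  rw [le_orderTop_iff_forall] at ha hb
  rw [coeff_mul, Finset.sum_eq_single (a, b)]
  · rintro ⟨i, j⟩ hij hne
    have hsum : i + j = a + b := (Finset.mem_antidiagonal.mp hij).2.2
    rcases lt_or_ge i a with hi | hi
    · rw [ha i (by exact_mod_cast hi), zero_mul]
    rcases lt_or_ge j b with hj | hj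
    · rw [hb j (by exact_mod_cast hj), mul_zero]
    exfalso
    rcases hi.lt_or_eq with hi | rfl
    · exact (add_lt_add_of_lt_of_le hi hj).ne' hsum
    · exact hne (Prod.ext rfl (add_left_cancel hsum))
  · intro hab
    by_cases hxa : x.coeff a = 0
    · rw [hxa, zero_mul]
    by_cases hyb : y.coeff b = 0
    · rw [hyb, mul_zero]
    exact absurd (Finset.mem_antidiagonal.mpr ⟨hxa, hyb, rfl⟩) hab

theorem coeff_mul_mul_add_add_of_le_orderTop {x y z : R⟦Γ⟧} {a b c : Γ} (ha : ↑a ≤ x.orderTop)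
    (hb : ↑b ≤ y.orderTop) (hc : ↑c ≤ z.orderTop) :
    (x * y * z).coeff (a + b + c) = x.coeff a * y.coeff b * z.coeff c := by
  have hab : ↑(a + b) ≤ (x * y).orderTop := (add_le_add ha hb).trans orderTop_add_le_mul
  rw [coeff_mul_add_of_le_orderTop hab hc, coeff_mul_add_of_le_orderTop ha hb]

end HahnSeries

theorem bar_bar (r : Rq) : bar (bar r) = r :=
  LaurentPolynomial.involutive_invert r

theorem deltaPlusLow_iff {s : Sq} {δ : ℤ} :
    DeltaPlusLow s δ ↔ s.coeff 0 = δ ∧ 0 ≤ s.orderTop := by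
  simp [DeltaPlusLow, HahnSeries.le_orderTop_iff_forall]

theorem deltaPlusLow_one : DeltaPlusLow 1 1 := by
  simp [deltaPlusLow_iff]

theorem DeltaPlusLow.coeff_of_nonpos {s : Sq} {δ : ℤ} (hs : DeltaPlusLow s δ) {n : ℤ}
    (hn : n ≤ 0) :
    s.coeff n = if n = 0 then δ else 0 := by
  rcases hn.lt_or_eq with hn | rfl
  · rw [hs.2 n hn, if_neg hn.ne]
  · rw [hs.1, if_pos rfl]

theorem DeltaPlusLow.sum {ι : Type*} {S : Finset ι} {s : ι → Sq} {δ : ι → ℤ}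
    (hs : ∀ i ∈ S, DeltaPlusLow (s i) (δ i)) : DeltaPlusLow (∑ i ∈ S, s i) (∑ i ∈ S, δ i) :=
  ⟨by rw [HahnSeries.coeff_sum]; exact Finset.sum_congr rfl fun i hi => (hs i hi).1,
    fun n hn => by rw [HahnSeries.coeff_sum]; exact Finset.sum_eq_zero fun i hi => (hs i hi).2 n hn⟩

theorem DeltaPlusLow.mul {s t : Sq} {δ ε : ℤ} (hs : DeltaPlusLow s δ) (ht : DeltaPlusLow t ε) :
    DeltaPlusLow (s * t) (δ * ε) := by
  rw [deltaPlusLow_iff] at *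
  refine ⟨?_, (add_nonneg hs.2 ht.2).trans HahnSeries.orderTop_add_le_mul⟩
  rw [← add_zero (0 : ℤ), HahnSeries.coeff_mul_add_of_le_orderTop hs.2 ht.2, hs.1, ht.1]

theorem deltaPlusLow_zero_iff {s : Sq} : DeltaPlusLow s 0 ↔ 0 < s.orderTop := by
  refine ⟨fun hs => (deltaPlusLow_iff.mp hs).2.lt_of_ne fun h => ?_, fun hs => ?_⟩
  · exact HahnSeries.coeff_orderTop_ne h.symm hs.1
  · exact ⟨HahnSeries.coeff_eq_zero_of_lt_orderTop hs,
      fun n hn => HahnSeries.coeff_eq_zero_of_lt_orderTop (hs.trans' (by exact_mod_cast hn))⟩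

theorem deltaPlusLow_emb_zero_iff (r : Rq) :
    DeltaPlusLow (emb r) 0 ↔ ∀ k : ℤ, 0 ≤ k → r.coeff k = 0 := by
  simp only [DeltaPlusLow, emb_coeff, neg_zero]
  constructor
  · rintro ⟨h0, hneg⟩ k hk
    rcases hk.eq_or_lt with rfl | hk
    · exact h0
    · simpa using hneg (-k) (by omega)
  · intro h
    exact ⟨h 0 le_rfl, fun n hn => h (-n) (by omega)⟩

section Gram

variable {ι : Type*} {G : ι → ι → Sq}

theorem deltaPlusLow_ite_of_eq_one {f : ι → Sq} {c : ι} (hfc : f c = 1)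
    (hf : ∀ i, i ≠ c → DeltaPlusLow (f i) 0) (i : ι) :
    DeltaPlusLow (f i) (if c = i then 1 else 0) := by
  split_ifs with h
  · exact h ▸ hfc ▸ deltaPlusLow_one
  · exact hf i (Ne.symm h)

theorem DeltaPlusLow.sum_sum_mul_mul {S T : Finset ι} {f g : ι → Sq} {c d : ι}
    (hG : ∀ i j, DeltaPlusLow (G i j) (if i = j then 1 else 0))
    (hc : c ∈ S) (hd : d ∈ T) (hfc : f c = 1) (hgd : g d = 1)
    (hf : ∀ i, i ≠ c → DeltaPlusLow (f i) 0) (hg : ∀ j, j ≠ d → DeltaPlusLow (g j) 0) :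
    DeltaPlusLow (∑ i ∈ S, ∑ j ∈ T, f i * g j * G i j) (if c = d then 1 else 0) := by
  have h := DeltaPlusLow.sum fun i (_ : i ∈ S) => DeltaPlusLow.sum fun j (_ : j ∈ T) =>
    ((deltaPlusLow_ite_of_eq_one hfc hf i).mul (deltaPlusLow_ite_of_eq_one hgd hg j)).mul (hG i j)
  convert h using 1
  simp only [ite_mul, one_mul, zero_mul]
  simp [hc, hd]

theorem coeff_sum_sum_mul_mul_of_le_orderTop {S : Finset ι} {f : ι → Sq} {n : ℤ}
    (hG : ∀ i j, DeltaPlusLow (G i j) (if i = j then 1 else 0))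
    (hf : ∀ i ∈ S, ↑n ≤ (f i).orderTop) :
    (∑ i ∈ S, ∑ j ∈ S, f i * f j * G i j).coeff (n + n) = ∑ i ∈ S, (f i).coeff n ^ 2 := by
  rw [HahnSeries.coeff_sum]
  refine Finset.sum_congr rfl fun i hi => ?_
  rw [HahnSeries.coeff_sum]
  have hterm : ∀ j ∈ S, (f i * f j * G i j).coeff (n + n) =
      if i = j then (f i).coeff n * (f j).coeff n else 0 := fun j hj => by
    rw [← add_zero (n + n), HahnSeries.coeff_mul_mul_add_add_of_le_orderTop (hf i hi) (hf j hj)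
      (deltaPlusLow_iff.mp (hG i j)).2, (hG i j).1]
    simp
  rw [Finset.sum_congr rfl hterm, Finset.sum_ite_eq, if_pos hi, sq]

theorem deltaPlusLow_of_sum_sum_mul_mul {S : Finset ι} {f : ι → Sq} {c : ι}
    (hG : ∀ i j, DeltaPlusLow (G i j) (if i = j then 1 else 0)) (hc : c ∈ S) (hfc : f c = 1)
    (hnorm : DeltaPlusLow (∑ i ∈ S, ∑ j ∈ S, f i * f j * G i j) 1) :
    ∀ i ∈ S, i ≠ c → DeltaPlusLow (f i) 0 := by
  by_contra! h
  obtain ⟨i₁, hi₁, hi₁c, hi₁low⟩ := h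
  obtain ⟨i₀, hi₀, hmin⟩ := Finset.exists_min_image (S.erase c) (fun i => (f i).orderTop)
    ⟨i₁, Finset.mem_erase.mpr ⟨hi₁c, hi₁⟩⟩
  have hle : (f i₀).orderTop ≤ 0 :=
    (hmin i₁ (Finset.mem_erase.mpr ⟨hi₁c, hi₁⟩)).trans
      (not_lt.mp (mt deltaPlusLow_zero_iff.mpr hi₁low))
  obtain ⟨n, hn⟩ := WithTop.ne_top_iff_exists.mp (hle.trans_lt (WithTop.coe_lt_top 0)).ne
  have hn0 : n ≤ 0 := by exact_mod_cast hn ▸ hle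
  have hbound : ∀ i ∈ S, ↑n ≤ (f i).orderTop := fun i hi => by
    by_cases hic : i = c
    · rw [hic, hfc, HahnSeries.orderTop_one]
      exact_mod_cast hn0
    · exact hn ▸ hmin i (Finset.mem_erase.mpr ⟨hic, hi⟩)
  have hsq : ∑ i ∈ S, (f i).coeff n ^ 2 = (f c).coeff n ^ 2 := by
    rw [← coeff_sum_sum_mul_mul_of_le_orderTop hG hbound, hnorm.coeff_of_nonpos (by omega), hfc,
      HahnSeries.coeff_one]
    by_cases h : n = 0 <;> simp [h]
  rw [← Finset.add_sum_erase S _ hc, add_eq_left, Finset.sum_eq_zero_iff_of_nonneg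
    (fun i _ => sq_nonneg _)] at hsq
  exact HahnSeries.coeff_orderTop_ne hn.symm (pow_eq_zero_iff two_ne_zero |>.mp (hsq i₀ hi₀))

end Gram

namespace Precanonical

variable (P : Precanonical C V) {b : Module.Basis C Rq V}

theorem pair_eq_sum_of_ψ_eq {v : V} (hv : P.ψ v = v) (w : V) :
    P.pair v w = ∑ c ∈ (P.std.repr v).support, ∑ d ∈ (P.std.repr w).support,
      emb (P.std.repr v c) * emb (P.std.repr w d) * P.pair (P.ψ (P.std c)) (P.std d) := by
  conv_lhs => rw [← hv, ← P.std.linearCombination_repr v, ← P.std.linearCombination_repr w]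
  simp only [Finsupp.linearCombination_apply, Finsupp.sum, map_sum, P.ψ_antilinear,
    AddMonoidHom.finsetSum_apply, P.pair_sesq_left, P.pair_sesq_right, bar_bar]
  rw [Finset.sum_comm]
  simp only [mul_assoc]

theorem condII_iff_repr : CondII P b ↔
    ∀ c, P.std.repr (b c) c = 1 ∧ ∀ c', c' ≠ c → P.std.repr (b c) c' ≠ 0 → c' < c := by
  refine forall_congr' fun c => ?_
  rw [Module.Basis.mem_span_image, map_sub, P.std.repr_self]
  simp only [Set.subset_def, Finset.mem_coe, Finsupp.mem_support_iff, Finsupp.sub_apply,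
    Set.mem_ofPred_eq]
  constructor
  · intro h
    refine ⟨?_, fun c' hc' hne => h c' (by simpa [Finsupp.single_apply, hc'.symm])⟩
    by_contra hc
    exact lt_irrefl c (h c (by simpa using sub_ne_zero.mpr hc))
  · rintro ⟨h1, h2⟩ c' hc'
    by_cases hcc : c' = c
    · subst hcc
      simp [h1] at hc'
    · exact h2 c' hcc (by simpa [Finsupp.single_apply, Ne.symm hcc] using hc')

theorem condII'_iff : CondII' P b ↔
    CondII P b ∧ ∀ c c', c' ≠ c → DeltaPlusLow (emb (P.std.repr (b c) c')) 0 := by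
  simp only [condII_iff_repr, CondII', deltaPlusLow_emb_zero_iff]
  constructor
  · intro h
    exact ⟨fun c => ⟨(h c).1, fun c' hc' => ((h c).2 c' hc').1⟩,
      fun c c' hc' => ((h c).2 c' hc').2⟩
  · rintro ⟨h, hlow⟩ c
    exact ⟨(h c).1, fun c' hc' => ⟨(h c).2 c' hc', hlow c c' hc'⟩⟩

theorem condIII_of_deltaPlusLow_repr (hP : AlmostBalanced P) (hI : ∀ c, P.ψ (b c) = b c)
    (hII : CondII P b) (hlow : ∀ c c', c' ≠ c → DeltaPlusLow (emb (P.std.repr (b c) c')) 0) :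
    CondIII P b := by
  have hdiag := fun c => ((P.condII_iff_repr).mp hII c).1
  have hmem : ∀ c, c ∈ (P.std.repr (b c)).support := fun c =>
    Finsupp.mem_support_iff.mpr (by rw [hdiag c]; exact one_ne_zero)
  intro c d
  rw [P.pair_eq_sum_of_ψ_eq (hI c)]
  exact DeltaPlusLow.sum_sum_mul_mul hP (hmem c) (hmem d) (by rw [hdiag c, map_one])
    (by rw [hdiag d, map_one]) (hlow c) (hlow d)

theorem deltaPlusLow_repr_of_condIII (hP : AlmostBalanced P) (hI : ∀ c, P.ψ (b c) = b c)
    (hII : CondII P b) (hIII : CondIII P b) (c c' : C) (hc' : c' ≠ c) :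
    DeltaPlusLow (emb (P.std.repr (b c) c')) 0 := by
  have hdiag := ((P.condII_iff_repr).mp hII c).1
  by_cases hc'S : c' ∈ (P.std.repr (b c)).support
  · have hnorm := hIII c c
    rw [if_pos rfl, P.pair_eq_sum_of_ψ_eq (hI c)] at hnorm
    exact deltaPlusLow_of_sum_sum_mul_mul hP
      (Finsupp.mem_support_iff.mpr (by rw [hdiag]; exact one_ne_zero)) (by rw [hdiag, map_one])
      hnorm c' hc'S hc'
  · rw [Finsupp.notMem_support_iff.mp hc'S, map_zero]
    exact ⟨rfl, fun _ _ => rfl⟩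

end Precanonical

/-- For an almost balanced pre-canonical structure and a
`ψ`-invariant basis `{b_c}` (condition (I)), conditions (II) and (III) together
are equivalent to condition (II'). -/
theorem condII_III_iff_II' (P : Precanonical C V) (hP : AlmostBalanced P)
    (b : Module.Basis C Rq V) (hI : ∀ c : C, P.ψ (b c) = b c) :
    (CondII P b ∧ CondIII P b) ↔ CondII' P b := by
  rw [P.condII'_iff]
  exact and_congr_right fun hII => ⟨fun hIII => P.deltaPlusLow_repr_of_condIII hP hI hII hIII,
    P.condIII_of_deltaPlusLow_repr hP hI hII⟩

end
end

section
/- Let {a_c}, {b_c} be bases of a free Z[q,q⁻¹]-module with b_c = Σ_{c'} m_{cc'}(q) a_{c'} and a_c = Σ_{c'} n_{cc'}(-q) b_{c'} where m_{cc'}(q), n_{cc'}(q) have coefficients in Z_{≥0} (balanced positivity, with m_{cc}=n_{cc}=1 and m_{cc'},n_{cc'} ∈ q⁻¹Z_{≥0}[[q⁻¹]] for c'≠c). Let {a*_c}, {b*_c} be the right dual bases with respect to a pairing for which the structure is balanced (ψ*(a_c)=a*_c). Then the dual bases satisfy a*_c = Σ_{c'} m_{c'c}(-p) b*_{c'} and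 b*_c = Σ_{c'} n_{c'c}(p) a*_{c'} where p = -q⁻¹; i.e., the dual pre-canonical structure is balanced positive in the variable p = -q⁻¹. -/
/-!
Statement 7: balanced positivity passes to the dual bases in the variable
`p = -q⁻¹`.  `ℤ[q,q⁻¹] = LaurentPolynomial ℤ`; `bar` is `q ↦ q⁻¹` and `subNeg`
is the substitution `q ↦ -q`, so that for a Laurent polynomial `f`,
`f(-p) = f(q⁻¹) = bar f` and `f(p) = f(-q⁻¹) = bar (subNeg f)`.
-/

noncomputable section

open LaurentPolynomial
open scoped Classical

/-- The monoid homomorphism `qⁿ ↦ (-q)ⁿ`. -/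
def negqPow : Multiplicative ℤ →* Rq where
  toFun k := ((((-1 : ℤˣ) ^ (Multiplicative.toAdd k) : ℤˣ) : ℤ)) •
      (LaurentPolynomial.T (Multiplicative.toAdd k) : Rq)
  map_one' := by simp
  map_mul' a b := by
    simp only [toAdd_mul]
    rw [zpow_add, LaurentPolynomial.T_add, smul_mul_smul_comm]
    push_cast
    ring_nf

/-- The substitution homomorphism `q ↦ -q` on `ℤ[q,q⁻¹]`. -/
def subNeg : Rq →+* Rq := (AddMonoidAlgebra.lift ℤ Rq ℤ negqPow).toRingHom

variable {C : Type*} [Fintype C] [PartialOrder C]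
  {V : Type*} [AddCommGroup V] [Module Rq V]

structure PrecanonicalR (C : Type*) [PartialOrder C] (V : Type*) [AddCommGroup V]
    [Module Rq V] where
  ψ : V →+ V
  ψ_invol : ∀ v, ψ (ψ v) = v
  ψ_antilinear : ∀ (r : Rq) (v : V), ψ (r • v) = bar r • ψ v
  pair : V →+ V →+ Rq
  pair_sesq_left : ∀ (r : Rq) (u v : V), pair (r • u) v = bar r * pair u v
  pair_sesq_right : ∀ (r : Rq) (u v : V), pair u (r • v) = r * pair u v
  flip_unitary : ∀ u v : V, pair u v = pair (ψ v) (ψ u)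
  std : Module.Basis C Rq V
  ψ_upper : ∀ c : C,
    ψ (std c) - std c ∈ Submodule.span Rq (std '' {c' : C | c' < c})

/-!
Coordinates with respect to a right dual basis are read off by pairing with the original basis.
Since the pairing is `bar`-semilinear on the left, pairing `u_d = Σ t_{dc'} v_{c'}` with `v*_c`
gives `⟨u_d, v*_c⟩ = bar t_{dc}`: dual bases transform by the `bar`-conjugate transpose. Applied
to `b = Σ m a` and `a = Σ subNeg(n) b`, and with `bar f = f(-p)`, `bar (subNeg f) = f(p)`, this
is the claim.
-/

namespace PrecanonicalR

variable (P : PrecanonicalR C V)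

def IsRightDual (u ustar : Module.Basis C Rq V) : Prop :=
  ∀ c c' : C, P.pair (u c) (ustar c') = if c = c' then 1 else 0

variable {P}

theorem IsRightDual.pair_eq_repr {u ustar : Module.Basis C Rq V} (h : P.IsRightDual u ustar)
    (d : C) (x : V) : P.pair (u d) x = ustar.repr x d := by
  nth_rewrite 1 [← ustar.sum_repr x]
  simp only [map_sum, P.pair_sesq_right, h d, mul_ite, mul_one, mul_zero,
    Finset.sum_ite_eq, Finset.mem_univ, if_true]

theorem pair_sum_smul_left (r : C → Rq) (f : C → V) (y : V) :
    P.pair (∑ c, r c • f c) y = ∑ c, bar (r c) * P.pair (f c) y := by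
  simp [P.pair_sesq_left]

theorem IsRightDual.eq_sum_bar_transpose {u v ustar vstar : Module.Basis C Rq V}
    (hu : P.IsRightDual u ustar) (hv : P.IsRightDual v vstar) (t : C → C → Rq)
    (ht : ∀ c, u c = ∑ c', t c c' • v c') (c : C) :
    vstar c = ∑ c', bar (t c' c) • ustar c' := by
  refine ustar.ext_elem fun d => ?_
  rw [ustar.repr_sum_self, ← hu.pair_eq_repr, ht, pair_sum_smul_left]
  simp only [hv _ c, mul_ite, mul_one, mul_zero, Finset.sum_ite_eq', Finset.mem_univ, if_true]

end PrecanonicalR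

theorem dual_balanced_positive_general (P : PrecanonicalR C V)
    (b : Module.Basis C Rq V) (m n : C → C → Rq)
    (hm : ∀ c : C, b c = ∑ c' : C, m c c' • P.std c')
    (hn : ∀ c : C, P.std c = ∑ c' : C, subNeg (n c c') • b c')
    (astar bstar : Module.Basis C Rq V)
    (hastar : ∀ c c' : C, P.pair (P.std c) (astar c') = if c = c' then 1 else 0)
    (hbstar : ∀ c c' : C, P.pair (b c) (bstar c') = if c = c' then 1 else 0) :
    (∀ c : C, astar c = ∑ c' : C, bar (m c' c) • bstar c') ∧
    (∀ c : C, bstar c = ∑ c' : C, bar (subNeg (n c' c)) • astar c') :=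
  ⟨PrecanonicalR.IsRightDual.eq_sum_bar_transpose hbstar hastar m hm,
    PrecanonicalR.IsRightDual.eq_sum_bar_transpose hastar hbstar
      (fun c c' => subNeg (n c c')) hn⟩

/-- Suppose the pre-canonical structure is balanced
(`⟨ψ(a_c), a_d⟩ = δ_{c,d}`), `{b_c}` is a basis with transition matrices
`b_c = Σ_{c'} m_{cc'}(q)·a_{c'}` and `a_c = Σ_{c'} n_{cc'}(-q)·b_{c'}` which are
balanced positive (`m_{cc} = n_{cc} = 1`, and for `c' ≠ c` the entries
`m_{cc'}(q), n_{cc'}(q)` lie in `q⁻¹ℤ_{≥0}[q⁻¹]`), and `{a*_c}`, `{b*_c}` are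
the right dual bases.  Then
`a*_c = Σ_{c'} m_{c'c}(-p)·b*_{c'}` and `b*_c = Σ_{c'} n_{c'c}(p)·a*_{c'}`
where `p = -q⁻¹`, i.e. `m_{c'c}(-p) = bar (m_{c'c})` and
`n_{c'c}(p) = bar (subNeg (n_{c'c}))`:  the dual structure is balanced positive
in the variable `p`. -/
theorem dual_balanced_positive (P : PrecanonicalR C V)
    (hbal : ∀ c d : C, P.pair (P.ψ (P.std c)) (P.std d) = if c = d then 1 else 0)
    (b : Module.Basis C Rq V) (m n : C → C → Rq)
    (hm : ∀ c : C, b c = ∑ c' : C, m c c' • P.std c')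
    (hn : ∀ c : C, P.std c = ∑ c' : C, subNeg (n c c') • b c')
    (hmdiag : ∀ c : C, m c c = 1) (hndiag : ∀ c : C, n c c = 1)
    (hmpos : ∀ c c' : C, c' ≠ c →
      (∀ k : ℤ, 0 ≤ k → (m c c').coeff k = 0) ∧ (∀ k : ℤ, 0 ≤ (m c c').coeff k))
    (hnpos : ∀ c c' : C, c' ≠ c →
      (∀ k : ℤ, 0 ≤ k → (n c c').coeff k = 0) ∧ (∀ k : ℤ, 0 ≤ (n c c').coeff k))
    (astar bstar : Module.Basis C Rq V)
    (hastar : ∀ c c' : C, P.pair (P.std c) (astar c') = if c = c' then 1 else 0)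
    (hbstar : ∀ c c' : C, P.pair (b c) (bstar c') = if c = c' then 1 else 0) :
    (∀ c : C, astar c = ∑ c' : C, bar (m c' c) • bstar c') ∧
    (∀ c : C, bstar c = ∑ c' : C, bar (subNeg (n c' c)) • astar c') :=
  dual_balanced_positive_general P b m n hm hn astar bstar hastar hbstar

end
end

section
/- Let C and C' be humorous categories and a: C → C' a full and essentially surjective functor commuting with grading shifts and duality. If C is mixed, then C' is mixed; moreover, each orthodox basis vector of K⁰(C') is the image under [a] of a unique orthodox basis vector of K⁰(C), and every other orthodox basis vector of K⁰(C) is sent to 0. -/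
/-!
Statement 11: if `a : C → C'` is a full, essentially surjective functor between
humorous categories commuting with grading shifts and duality, and `C` is
mixed, then `C'` is mixed; moreover every orthodox basis vector of `K⁰(C')`
(the class of a self-dual indecomposable) is the image of a unique orthodox
basis vector of `K⁰(C)`, and every other orthodox basis vector of `K⁰(C)` is
sent to `0`.  We state the Grothendieck-group claims at the level of objects:
classes of self-dual indecomposables.
-/

open CategoryTheory CategoryTheory.Limits Opposite

universe v u v' u'

noncomputable section

variable (K : Type*) [Field K]

section Defs

variable {C : Type u} [Category.{v} C] [Preadditive C]

/-- An object is indecomposable. -/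
def Indec (M : C) : Prop :=
  ¬ IsZero M ∧ ∀ e : End M, e * e = e → e = 0 ∨ e = 1

/-- The `i`-th power (`i : ℤ`) of the shift equivalence, on objects. -/
def shiftZ (σ : C ≌ C) : ℤ → C → C
  | Int.ofNat n, X => (σ.functor.obj)^[n] X
  | Int.negSucc n, X => (σ.inverse.obj)^[n + 1] X

/-- `P` is self-dual for the duality `D`. -/
def SelfDual (D : Cᵒᵖ ⥤ C) (P : C) : Prop :=
  Nonempty (D.obj (op P) ≅ P)

end Defs

section Humorous

variable (C : Type u) [Category.{v} C] [Preadditive C] [CategoryTheory.Linear K C]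
  [HasFiniteBiproducts C]

/-- The axioms of a humorous category, for the shift `σ` and duality `D`. -/
structure IsHumorous (σ : C ≌ C) (D : Cᵒᵖ ⥤ C) : Prop where
  krullSchmidt : ∀ X : C, ∃ (k : ℕ) (f : Fin k → C),
    (∀ i, Indec (f i)) ∧ Nonempty (X ≅ ⨁ f)
  homFinite : ∀ X Y : C, FiniteDimensional K (X ⟶ Y)
  homVanish : ∀ X Y : C, ∃ N : ℤ, ∀ i : ℤ, i < N → ∀ f : X ⟶ shiftZ σ i Y, f = 0
  dualIsEquivalence : D.IsEquivalence
  dualShift : ∀ M : C,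
    Nonempty (D.obj (op (σ.functor.obj M)) ≅ σ.inverse.obj (D.obj (op M)))
  shiftFree : ∀ P : C, Indec P → ∀ n : ℤ, n ≠ 0 → ¬ Nonempty (shiftZ σ n P ≅ P)
  orbitFin : ∃ (k : ℕ) (reps : Fin k → C),
    (∀ i, Indec (reps i) ∧ SelfDual D (reps i)) ∧
    ∀ M : C, Indec M → ∃ (i : Fin k) (n : ℤ), Nonempty (shiftZ σ n (reps i) ≅ M)
  selfDualUnique : ∀ P Q : C, Indec P → Indec Q → SelfDual D P → SelfDual D Q →
    (∃ n : ℤ, Nonempty (shiftZ σ n P ≅ Q)) → Nonempty (P ≅ Q)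
  endLocal : ∀ P : C, Indec P → ∀ f : End P,
    ∃ a : K, IsNilpotent (f - (show End P from a • 𝟙 P))

/-- A weight function exhibiting mixedness. -/
structure IsWeightFn (σ : C ≌ C) (D : Cᵒᵖ ⥤ C) (wt : C → ℤ) : Prop where
  dual : ∀ M : C, Indec M → wt (D.obj (op M)) = - wt M
  shift : ∀ M : C, Indec M → wt (σ.functor.obj M) = wt M + 1
  hom_lt : ∀ M N : C, Indec M → Indec N → wt N < wt M → ∀ f : M ⟶ N, f = 0
  hom_eq : ∀ M N : C, Indec M → Indec N → ¬ Nonempty (M ≅ N) → wt N = wt M →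
    ∀ f : M ⟶ N, f = 0
  end_scalar : ∀ M : C, Indec M → ∀ f : End M, ∃ a : K, f = a • 𝟙 M

/-- The humorous category is mixed. -/
def Mixed (σ : C ≌ C) (D : Cᵒᵖ ⥤ C) : Prop :=
  ∃ wt : C → ℤ, IsWeightFn K C σ D wt

end Humorous

variable {C : Type u} [Category.{v} C] [Preadditive C] [CategoryTheory.Linear K C]
  [HasFiniteBiproducts C]
variable {C' : Type u'} [Category.{v'} C'] [Preadditive C'] [CategoryTheory.Linear K C']
  [HasFiniteBiproducts C']

/-!
Since `F` is full, every map `F M ⟶ F N` is the image of a map `M ⟶ N`, so the Hom-vanishing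
conditions of a weight function on `C` pass to `C'`. In particular an isomorphism
`F M ≅ F N` between nonzero images of non-isomorphic indecomposables would lift to a map that
vanishes by weight. By Krull–Schmidt and essential surjectivity every indecomposable of `C'` is
the image of an indecomposable of `C`, so `wt' (F M) := wt M` is well defined, and it inherits
compatibility with shift and duality. Every endomorphism of `F M` is the image of a scalar, hence
zero or invertible, and together with locality of `End` in `C'` this makes `End = K` in `C'`.
-/

section Indecomposable

variable {A : Type*} [Category A] [Preadditive A]

lemma Indec.op {M : A} (h : Indec M) : Indec (op M) := by
  refine ⟨fun hz => h.1 hz.unop, fun f hf => ?_⟩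
  have hf' : f.unop ≫ f.unop = f.unop := congrArg Quiver.Hom.unop hf
  refine (h.2 f.unop hf').imp (fun h0 => ?_) (fun h1 => ?_) <;>
    apply Quiver.Hom.unop_inj <;> assumption

lemma Indec.map {B : Type*} [Category B] [Preadditive B] (G : A ⥤ B) [G.Full] [G.Faithful]
    {X : A} (h : Indec X) : Indec (G.obj X) := by
  refine ⟨fun hz => h.1 ?_, fun e he => ?_⟩
  · rw [IsZero.iff_id_eq_zero]
    exact G.map_injective (by rw [G.map_id, G.map_zero]; exact hz.eq_of_src _ _)
  · have he' : G.preimage e ≫ G.preimage e = G.preimage e :=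
      G.map_injective (by rw [G.map_comp, G.map_preimage]; exact he)
    refine (h.2 (G.preimage e) he').imp (fun h0 => ?_) (fun h1 => ?_)
    · rw [← G.map_preimage e, show G.preimage e = 0 from h0, G.map_zero]
    · rw [← G.map_preimage e, show G.preimage e = 𝟙 X from h1, G.map_id]; rfl

lemma Indec.of_forall_eq_zero_or_isIso {X : A} (hX : ¬ IsZero X)
    (h : ∀ f : X ⟶ X, f = 0 ∨ IsIso f) : Indec X := by
  refine ⟨hX, fun e he => ?_⟩
  rcases h e with h0 | hiso
  · exact .inl h0
  · exact .inr ((cancel_epi e).mp (he.trans (Category.comp_id _).symm))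

lemma eq_zero_of_isNilpotent_of_forall_eq_zero_or_isIso {X : A} (hX : ¬ IsZero X)
    (h : ∀ f : X ⟶ X, f = 0 ∨ IsIso f) {f : End X} (hf : IsNilpotent f) : f = 0 := by
  have : Nontrivial (End X) := ⟨⟨1, 0, fun h1 => hX ((IsZero.iff_id_eq_zero X).mpr h1)⟩⟩
  exact (h f).resolve_right fun hiso => hf.not_isUnit ((isUnit_iff_isIso f).mpr hiso)

lemma forall_eq_zero_or_isIso_of_iso {X Y : A} (e : X ≅ Y)
    (h : ∀ f : X ⟶ X, f = 0 ∨ IsIso f) (f : Y ⟶ Y) : f = 0 ∨ IsIso f := by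
  have hf : f = e.inv ≫ (e.hom ≫ f ≫ e.inv) ≫ e.hom := by simp
  rcases h (e.hom ≫ f ≫ e.inv) with h0 | hiso
  · exact .inl (by rw [hf, h0]; simp)
  · exact .inr (by rw [hf]; infer_instance)

lemma eq_zero_of_forall_eq_zero_of_iso_map {B : Type*} [Category B] [Preadditive B]
    (G : A ⥤ B) [G.Full] {M N : A} {M' N' : B} (e : G.obj M ≅ M') (e' : G.obj N ≅ N')
    (h : ∀ g : M ⟶ N, g = 0) (f : M' ⟶ N') : f = 0 := by
  have hf : f = e.inv ≫ G.map (G.preimage (e.hom ≫ f ≫ e'.inv)) ≫ e'.hom := by simp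
  rw [hf, h (G.preimage _)]
  simp

/-- The idempotents `π i ≫ ι i` sum to `𝟙`, so one of them is `𝟙`. -/
lemma Indec.exists_iso_of_iso_biproduct {k : ℕ} {f : Fin k → A} [HasBiproduct f] {P : A}
    (hP : Indec P) (g : ⨁ f ≅ P) : ∃ i, Nonempty (f i ≅ P) := by
  set E : Fin k → End P := fun i => g.inv ≫ biproduct.π f i ≫ biproduct.ι f i ≫ g.hom with hE
  have hidem : ∀ i, E i * E i = E i := fun i => by
    change (g.inv ≫ _) ≫ (g.inv ≫ _) = _
    simp [hE]
  have hsum : ∑ i, E i = 𝟙 P := by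
    simp only [hE]
    rw [← Preadditive.comp_sum]
    simp_rw [← Category.assoc (biproduct.π f _)]
    rw [← Preadditive.sum_comp, biproduct.total]
    simp
  by_contra! hnone
  have hzero : ∀ i, E i = 0 := fun i => (hP.2 (E i) (hidem i)).resolve_right fun h1 =>
    (hnone i).false ⟨biproduct.ι f i ≫ g.hom, g.inv ≫ biproduct.π f i, by simp,
      by simpa [hE] using h1⟩
  exact hP.1 ((IsZero.iff_id_eq_zero P).mpr (by simp [← hsum, hzero]))

end Indecomposable

variable {K}

section Transfer

variable {A : Type*} [Category A] [Preadditive A] [CategoryTheory.Linear K A]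
variable {B : Type*} [Category B] [Preadditive B]

lemma isIso_smul_id {a : K} (ha : a ≠ 0) (M : A) : IsIso (a • 𝟙 M) :=
  ⟨a⁻¹ • 𝟙 M, by simp [smul_smul, ha], by simp [smul_smul, ha]⟩

lemma IsHumorous.indec_dual [HasFiniteBiproducts A] {σ : A ≌ A} {D : Aᵒᵖ ⥤ A}
    (hA : IsHumorous K A σ D) {M : A} (hM : Indec M) : Indec (D.obj (op M)) :=
  have := hA.dualIsEquivalence
  hM.op.map D

lemma IsHumorous.exists_indec_preimage [HasFiniteBiproducts A] [HasFiniteBiproducts B]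
    {σ : A ≌ A} {D : Aᵒᵖ ⥤ A} (hA : IsHumorous K A σ D) (F : A ⥤ B) [F.Additive] [F.EssSurj]
    {P' : B} (hP' : Indec P') : ∃ M : A, Indec M ∧ Nonempty (F.obj M ≅ P') := by
  obtain ⟨k, f, hf, ⟨d⟩⟩ := hA.krullSchmidt (F.objPreimage P')
  obtain ⟨i, ⟨e⟩⟩ := hP'.exists_iso_of_iso_biproduct
    ((F.mapBiproduct f).symm ≪≫ (F.mapIso d).symm ≪≫ F.objObjPreimageIso P')
  exact ⟨f i, hf i, ⟨e⟩⟩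

def mapDualIso {D : Aᵒᵖ ⥤ A} {D' : Bᵒᵖ ⥤ B} {F : A ⥤ B} (ηd : F.op ⋙ D' ≅ D ⋙ F) {M : A}
    {M' : B} (e : F.obj M ≅ M') : F.obj (D.obj (op M)) ≅ D'.obj (op M') :=
  (ηd.app (op M)).symm ≪≫ (D'.mapIso e.op).symm

/-- Junk value `0` off the images of indecomposables; it is only ever evaluated at nonzero
indecomposables. -/
def weightAlong (F : A ⥤ B) (wt : A → ℤ) (M' : B) : ℤ :=
  open Classical in
  if h : ∃ M : A, Indec M ∧ Nonempty (F.obj M ≅ M') then wt h.choose else 0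

namespace IsWeightFn

variable {σ : A ≌ A} {D : Aᵒᵖ ⥤ A} {wt : A → ℤ}

lemma wt_eq_of_iso (hw : IsWeightFn K A σ D wt) {M N : A} (hM : Indec M) (hN : Indec N)
    (e : M ≅ N) : wt M = wt N := by
  by_contra hne
  rcases lt_or_gt_of_ne hne with h | h
  · exact hN.1 (IsZero.of_mono_eq_zero e.inv (hw.hom_lt N M hN hM h e.inv))
  · exact hM.1 (IsZero.of_mono_eq_zero e.hom (hw.hom_lt M N hM hN h e.hom))

/-- One of the two maps of the isomorphism lifts to a map that vanishes by weight. -/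
lemma nonempty_iso_of_map_iso (hw : IsWeightFn K A σ D wt) (F : A ⥤ B) [F.Full]
    {M N : A} (hM : Indec M) (hN : Indec N) (hFM : ¬ IsZero (F.obj M))
    (e : F.obj M ≅ F.obj N) : Nonempty (M ≅ N) := by
  by_contra hne
  apply hFM
  have lift_eq_zero {X Y : A} (h : ∀ g : X ⟶ Y, g = 0) (f : F.obj X ⟶ F.obj Y) : f = 0 :=
    eq_zero_of_forall_eq_zero_of_iso_map F (Iso.refl _) (Iso.refl _) h f
  rcases lt_trichotomy (wt N) (wt M) with h | h | h
  · exact IsZero.of_mono_eq_zero e.hom (lift_eq_zero (hw.hom_lt M N hM hN h) _)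
  · exact IsZero.of_mono_eq_zero e.hom (lift_eq_zero (hw.hom_eq M N hM hN hne h) _)
  · exact IsZero.of_epi_eq_zero e.inv (lift_eq_zero (hw.hom_lt N M hN hM h) _)

lemma map_endo_eq_zero_or_isIso (hw : IsWeightFn K A σ D wt) (F : A ⥤ B) [F.Full] {M : A}
    (hM : Indec M) (g : F.obj M ⟶ F.obj M) : g = 0 ∨ IsIso g := by
  obtain ⟨a, ha⟩ := hw.end_scalar M hM (F.preimage g)
  have hg : g = F.map (a • 𝟙 M) := by rw [← ha, F.map_preimage]
  by_cases h0 : a = 0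
  · exact .inl (by rw [hg, h0, zero_smul, F.map_zero])
  · have := isIso_smul_id h0 M
    exact .inr (by rw [hg]; infer_instance)

lemma indec_map (hw : IsWeightFn K A σ D wt) (F : A ⥤ B) [F.Full] {M : A} (hM : Indec M)
    (hFM : ¬ IsZero (F.obj M)) : Indec (F.obj M) :=
  .of_forall_eq_zero_or_isIso hFM (hw.map_endo_eq_zero_or_isIso F hM)

lemma weightAlong_eq (hw : IsWeightFn K A σ D wt) (F : A ⥤ B) [F.Full] {M : A} {M' : B}
    (hM : Indec M) (hM' : ¬ IsZero M') (e : F.obj M ≅ M') : weightAlong F wt M' = wt M := by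
  have hex : ∃ M₀ : A, Indec M₀ ∧ Nonempty (F.obj M₀ ≅ M') := ⟨M, hM, ⟨e⟩⟩
  obtain ⟨hM₀, ⟨e₀⟩⟩ := hex.choose_spec
  obtain ⟨d⟩ := hw.nonempty_iso_of_map_iso F hM₀ hM (fun hz => hM' (hz.of_iso e₀.symm))
    (e₀ ≪≫ e.symm)
  rw [weightAlong, dif_pos hex]
  exact hw.wt_eq_of_iso hM₀ hM d

theorem map [HasFiniteBiproducts A] [CategoryTheory.Linear K B] [HasFiniteBiproducts B]
    {σ' : B ≌ B} {D' : Bᵒᵖ ⥤ B} (hw : IsWeightFn K A σ D wt) (hA : IsHumorous K A σ D)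
    (hB : IsHumorous K B σ' D') (F : A ⥤ B) [F.Additive] [F.Full] [F.EssSurj]
    (ηs : σ.functor ⋙ F ≅ F ⋙ σ'.functor) (ηd : F.op ⋙ D' ≅ D ⋙ F) :
    IsWeightFn K B σ' D' (weightAlong F wt) where
  dual M' hM' := by
    obtain ⟨M, hM, ⟨e⟩⟩ := hA.exists_indec_preimage F hM'
    rw [hw.weightAlong_eq F (hA.indec_dual hM) (hB.indec_dual hM').1 (mapDualIso ηd e),
      hw.weightAlong_eq F hM hM'.1 e, hw.dual M hM]
  shift M' hM' := by
    obtain ⟨M, hM, ⟨e⟩⟩ := hA.exists_indec_preimage F hM'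
    rw [hw.weightAlong_eq F (hM.map σ.functor) (hM'.map σ'.functor).1
        (ηs.app M ≪≫ σ'.functor.mapIso e),
      hw.weightAlong_eq F hM hM'.1 e, hw.shift M hM]
  hom_lt M' N' hM' hN' hlt f := by
    obtain ⟨M, hM, ⟨e⟩⟩ := hA.exists_indec_preimage F hM'
    obtain ⟨N, hN, ⟨e'⟩⟩ := hA.exists_indec_preimage F hN'
    rw [hw.weightAlong_eq F hM hM'.1 e, hw.weightAlong_eq F hN hN'.1 e'] at hlt
    exact eq_zero_of_forall_eq_zero_of_iso_map F e e' (hw.hom_lt M N hM hN hlt) f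
  hom_eq M' N' hM' hN' hne heq f := by
    obtain ⟨M, hM, ⟨e⟩⟩ := hA.exists_indec_preimage F hM'
    obtain ⟨N, hN, ⟨e'⟩⟩ := hA.exists_indec_preimage F hN'
    have hne' : ¬ Nonempty (M ≅ N) := fun ⟨d⟩ => hne ⟨e.symm ≪≫ F.mapIso d ≪≫ e'⟩
    rw [hw.weightAlong_eq F hM hM'.1 e, hw.weightAlong_eq F hN hN'.1 e'] at heq
    exact eq_zero_of_forall_eq_zero_of_iso_map F e e' (hw.hom_eq M N hM hN hne' heq) f
  -- `F` is not `K`-linear, so scalars do not transport; locality of `End M'` supplies them.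
  end_scalar M' hM' f := by
    obtain ⟨M, hM, ⟨e⟩⟩ := hA.exists_indec_preimage F hM'
    obtain ⟨a, hnil⟩ := hB.endLocal M' hM' f
    exact ⟨a, sub_eq_zero.mp (eq_zero_of_isNilpotent_of_forall_eq_zero_or_isIso hM'.1
      (forall_eq_zero_or_isIso_of_iso e (hw.map_endo_eq_zero_or_isIso F hM)) hnil)⟩

lemma selfDual_of_map_iso [HasFiniteBiproducts A] {D' : Bᵒᵖ ⥤ B} (hw : IsWeightFn K A σ D wt)
    (hA : IsHumorous K A σ D) (F : A ⥤ B) [F.Full] (ηd : F.op ⋙ D' ≅ D ⋙ F) {M : A} {P' : B}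
    (hM : Indec M) (hP' : ¬ IsZero P') (hsd : SelfDual D' P') (e : F.obj M ≅ P') :
    SelfDual D M := by
  obtain ⟨s⟩ := hsd
  let i : F.obj (D.obj (op M)) ≅ P' := mapDualIso ηd e ≪≫ s
  exact hw.nonempty_iso_of_map_iso F (hA.indec_dual hM) hM (fun hz => hP' (hz.of_iso i.symm))
    (i ≪≫ e.symm)

end IsWeightFn

end Transfer

theorem mixed_of_full_essSurj
    (σ : C ≌ C) (D : Cᵒᵖ ⥤ C) (σ' : C' ≌ C') (D' : C'ᵒᵖ ⥤ C')
    (hC : IsHumorous K C σ D) (hC' : IsHumorous K C' σ' D')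
    (F : C ⥤ C') [F.Additive] [F.Full] [F.EssSurj]
    (hshift : Nonempty (σ.functor ⋙ F ≅ F ⋙ σ'.functor))
    (hdual : Nonempty (F.op ⋙ D' ≅ D ⋙ F))
    (hmixed : Mixed K C σ D) :
    Mixed K C' σ' D' ∧
    -- every orthodox basis vector of `K⁰(C')` is the image of an orthodox
    -- basis vector of `K⁰(C)` ...
    (∀ P' : C', Indec P' → SelfDual D' P' →
      ∃ P : C, Indec P ∧ SelfDual D P ∧ Nonempty (F.obj P ≅ P')) ∧
    -- ... which is unique ...
    (∀ P Q : C, Indec P → SelfDual D P → Indec Q → SelfDual D Q →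
      ∀ P' : C', Indec P' → SelfDual D' P' →
      Nonempty (F.obj P ≅ P') → Nonempty (F.obj Q ≅ P') → Nonempty (P ≅ Q)) ∧
    -- ... and every other orthodox basis vector of `K⁰(C)` is sent to `0`.
    (∀ Q : C, Indec Q → SelfDual D Q →
      (∀ P' : C', Indec P' → SelfDual D' P' → ¬ Nonempty (F.obj Q ≅ P')) →
      IsZero (F.obj Q)) := by
  obtain ⟨wt, hw⟩ := hmixed
  obtain ⟨ηs⟩ := hshift
  obtain ⟨ηd⟩ := hdual
  refine ⟨⟨_, hw.map hC hC' F ηs ηd⟩, ?_, ?_, ?_⟩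
  · intro P' hP' hsd'
    obtain ⟨M, hM, ⟨e⟩⟩ := hC.exists_indec_preimage F hP'
    exact ⟨M, hM, hw.selfDual_of_map_iso hC F ηd hM hP'.1 hsd' e, ⟨e⟩⟩
  · rintro P Q hP - hQ - P' hP' - ⟨eP⟩ ⟨eQ⟩
    exact hw.nonempty_iso_of_map_iso F hP hQ (fun hz => hP'.1 (hz.of_iso eP.symm))
      (eP ≪≫ eQ.symm)
  · rintro Q hQ ⟨sQ⟩ hnone
    by_contra hFQ
    exact hnone (F.obj Q) (hw.indec_map F hQ hFQ) ⟨ηd.app (op Q) ≪≫ F.mapIso sQ⟩ ⟨Iso.refl _⟩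

end
end

section
/- Let C be a mixed humorous category over a field K whose pre-canonical structure is induced as in Lemma: bar involution from duality, Euler pairing ⟨[M],[N]⟩ = Σᵢ q⁻ⁱ dim Hom(M,N(i)), and standard basis given by classes of self-dual objects M_c with M_c ≅ P_c ⊕ (⊕_{c'<c} P_{c'}^{⊕m_{c'}}). Then the orthodox basis {[P_c]} is a canonical basis; conversely, if the orthodox basis is canonical then C is mixed. In other words, the orthodox basis is canonical if and only if C is mixed. -/
open CategoryTheory CategoryTheory.Limits Opposite

universe v u

noncomputable section

variable (K : Type*) [Field K]

section Humorous

variable (C : Type u) [Category.{v} C] [Preadditive C] [CategoryTheory.Linear K C]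
  [HasFiniteBiproducts C]

/-- Almost orthonormality of the orthodox basis: this is exactly condition
(III) of canonicity for the classes of the self-dual indecomposables `P_c`,
since the Euler pairing is `⟨[P],[P']⟩ = Σᵢ q⁻ⁱ dim Hom(P, P'(i))`.  Conditions
(I) and (II) hold automatically, so the orthodox basis is canonical iff this
condition holds. -/
def OrthodoxCanonical (σ : C ≌ C) (D : Cᵒᵖ ⥤ C) : Prop :=
  (∀ P P' : C, Indec P → SelfDual D P → Indec P' → SelfDual D P' →
    ∀ i : ℤ, i < 0 → ∀ f : P ⟶ shiftZ σ i P', f = 0) ∧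
  (∀ P P' : C, Indec P → SelfDual D P → Indec P' → SelfDual D P' →
    ¬ Nonempty (P ≅ P') → ∀ f : P ⟶ P', f = 0) ∧
  (∀ P : C, Indec P → SelfDual D P → ∀ f : End P, ∃ a : K, f = a • 𝟙 P)

end Humorous

/-!
If `C` is mixed, duality negates weights, so self-dual indecomposables have weight `0` and the
weight axioms are literally the vanishing conditions of almost orthonormality.

Conversely, every indecomposable is `P(n)` for a self-dual indecomposable `P`, with `n` unique
because the shift acts freely and each orbit has only one self-dual object up to isomorphism.
Taking `n` as the weight, the weight axioms for `P(n)` and `P'(m)` become, after shifting by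
`-n`, almost orthonormality for `P` and `P'(m - n)`.
-/

section Shift

variable {C : Type*} [Category C]

theorem CategoryTheory.Equivalence.powNat_functor_obj (e : C ≌ C) :
    ∀ (m : ℕ) (X : C), (e.powNat m).functor.obj X = e.functor.obj^[m] X
  | 0, _ => rfl
  | 1, _ => rfl
  | m + 2, X => e.powNat_functor_obj (m + 1) (e.functor.obj X)

theorem shiftZ_eq_pow_functor_obj (σ : C ≌ C) (n : ℤ) (X : C) :
    shiftZ σ n X = (σ ^ n).functor.obj X := by
  cases n with
  | ofNat m => exact (σ.powNat_functor_obj m X).symm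
  | negSucc m => exact (σ.symm.powNat_functor_obj (m + 1) X).symm

theorem shiftZ_congr (σ : C ≌ C) (n : ℤ) {X Y : C} (e : X ≅ Y) :
    Nonempty (shiftZ σ n X ≅ shiftZ σ n Y) := by
  rw [shiftZ_eq_pow_functor_obj, shiftZ_eq_pow_functor_obj]
  exact ⟨(σ ^ n).functor.mapIso e⟩

theorem shiftZ_succ (σ : C ≌ C) (n : ℤ) (X : C) :
    Nonempty (shiftZ σ (n + 1) X ≅ σ.functor.obj (shiftZ σ n X)) := by
  match n with
  | Int.ofNat m => exact ⟨eqToIso (Function.iterate_succ_apply' σ.functor.obj m X)⟩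
  | Int.negSucc 0 => exact ⟨(σ.counitIso.app X).symm⟩
  | Int.negSucc (m + 1) =>
    exact ⟨(σ.counitIso.app _).symm ≪≫
      σ.functor.mapIso (eqToIso (Function.iterate_succ_apply' σ.inverse.obj (m + 1) X).symm)⟩

theorem shiftZ_pred (σ : C ≌ C) (n : ℤ) (X : C) :
    Nonempty (shiftZ σ (n - 1) X ≅ σ.inverse.obj (shiftZ σ n X)) := by
  obtain ⟨e⟩ := shiftZ_succ σ (n - 1) X
  rw [sub_add_cancel] at e
  exact ⟨σ.unitIso.app _ ≪≫ σ.inverse.mapIso e.symm⟩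

theorem nonempty_iso_of_iso_succ {A B : ℤ → C} {F : C ⥤ C} (hF : F.FullyFaithful)
    (hA : ∀ n, Nonempty (A (n + 1) ≅ F.obj (A n)))
    (hB : ∀ n, Nonempty (B (n + 1) ≅ F.obj (B n)))
    (h₀ : Nonempty (A 0 ≅ B 0)) (n : ℤ) : Nonempty (A n ≅ B n) := by
  induction n using Int.induction_on with
  | zero => exact h₀
  | succ n ih => exact ⟨(hA n).some ≪≫ F.mapIso ih.some ≪≫ (hB n).some.symm⟩
  | pred n ih =>
    obtain ⟨a⟩ := hA (-n - 1)
    obtain ⟨b⟩ := hB (-n - 1)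
    rw [sub_add_cancel] at a b
    exact ⟨hF.preimageIso (a.symm ≪≫ ih.some ≪≫ b)⟩

theorem shiftZ_add (σ : C ≌ C) (m n : ℤ) (X : C) :
    Nonempty (shiftZ σ m (shiftZ σ n X) ≅ shiftZ σ (m + n) X) :=
  nonempty_iso_of_iso_succ (A := fun m => shiftZ σ m (shiftZ σ n X))
    (B := fun m => shiftZ σ (m + n) X) σ.fullyFaithfulFunctor
    (fun m => shiftZ_succ σ m _)
    (fun m => by simpa only [add_right_comm] using shiftZ_succ σ (m + n) X)
    (by rw [zero_add]; exact ⟨Iso.refl _⟩) m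

theorem shiftZ_iso_shiftZ (σ : C ≌ C) {m n : ℤ} {X Y : C}
    (e : shiftZ σ m X ≅ shiftZ σ n Y) : Nonempty (X ≅ shiftZ σ (n - m) Y) := by
  obtain ⟨a⟩ := shiftZ_add σ (-m) m X
  obtain ⟨b⟩ := shiftZ_add σ (-m) n Y
  obtain ⟨c⟩ := shiftZ_congr σ (-m) e
  rw [neg_add_cancel] at a
  rw [neg_add_eq_sub] at b
  exact ⟨a.symm ≪≫ c ≪≫ b⟩

theorem dual_shiftZ {σ : C ≌ C} {D : Cᵒᵖ ⥤ C}
    (hD : ∀ M : C, Nonempty (D.obj (op (σ.functor.obj M)) ≅ σ.inverse.obj (D.obj (op M))))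
    (n : ℤ) (X : C) : Nonempty (D.obj (op (shiftZ σ n X)) ≅ shiftZ σ (-n) (D.obj (op X))) :=
  nonempty_iso_of_iso_succ (A := fun n => D.obj (op (shiftZ σ n X)))
    (B := fun n => shiftZ σ (-n) (D.obj (op X))) σ.fullyFaithfulInverse
    (fun n => by
      obtain ⟨e⟩ := shiftZ_succ σ n X
      exact ⟨(D.mapIso e.op).symm ≪≫ (hD _).some⟩)
    (fun n => by simpa only [neg_add', ← sub_eq_add_neg] using shiftZ_pred σ (-n) _)
    ⟨Iso.refl _⟩ n

end Shift

section Transport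

variable {C : Type*} [Category C] [Preadditive C]

theorem Indec.of_mulEquiv {D : Type*} [Category D] [Preadditive D] {X : C} {Y : D}
    (φ : End X ≃* End Y) (h : Indec X) : Indec Y := by
  refine ⟨fun hY => h.1 ?_, fun e he => ?_⟩
  · have hone : φ.symm 1 = φ.symm 0 := congrArg φ.symm ((IsZero.iff_id_eq_zero Y).mp hY)
    rw [map_one, map_zero] at hone
    exact (IsZero.iff_id_eq_zero X).mpr hone
  · rcases h.2 (φ.symm e) (by rw [← map_mul, he]) with h0 | h1
    · exact Or.inl (φ.symm.injective (h0.trans (map_zero φ.symm).symm))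
    · exact Or.inr (φ.symm.injective (h1.trans (map_one φ.symm).symm))

theorem Indec.of_iso {X Y : C} (e : X ≅ Y) (h : Indec X) : Indec Y :=
  h.of_mulEquiv e.conj

def endMulEquivShiftZ (σ : C ≌ C) (n : ℤ) (X : C) : End X ≃* End (shiftZ σ n X) :=
  shiftZ_eq_pow_functor_obj σ n X ▸ (σ ^ n).fullyFaithfulFunctor.mulEquivEnd X

theorem Indec.shiftZ (σ : C ≌ C) (n : ℤ) {X : C} (h : Indec X) : Indec (shiftZ σ n X) :=
  h.of_mulEquiv (endMulEquivShiftZ σ n X)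

theorem eq_zero_of_homEquiv {X Y X' Y' : C} (e : (X ⟶ Y) ≃ (X' ⟶ Y'))
    (h : ∀ f : X ⟶ Y, f = 0) (g : X' ⟶ Y') : g = 0 :=
  e.symm.injective (by rw [h (e.symm g), h (e.symm 0)])

theorem eq_zero_of_shiftZ (σ : C ≌ C) {m n : ℤ} {X Y M N : C}
    (eM : shiftZ σ m X ≅ M) (eN : shiftZ σ n Y ≅ N)
    (h : ∀ f : X ⟶ shiftZ σ (n - m) Y, f = 0) (g : M ⟶ N) : g = 0 := by
  have h' : ∀ f : shiftZ σ m X ⟶ shiftZ σ m (shiftZ σ (n - m) Y), f = 0 := by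
    rw [shiftZ_eq_pow_functor_obj σ m X, shiftZ_eq_pow_functor_obj σ m (shiftZ σ (n - m) Y)]
    exact eq_zero_of_homEquiv (σ ^ m).fullyFaithfulFunctor.homEquiv h
  obtain ⟨e⟩ := shiftZ_add σ m (n - m) Y
  rw [add_sub_cancel] at e
  exact eq_zero_of_homEquiv (Iso.homCongr eM (e ≪≫ eN)) h' g

theorem isReduced_end_of_forall_eq_smul_id {K : Type*} [Field K] [Linear K C] {P : C}
    (h : ∀ f : End P, ∃ a : K, f = a • 𝟙 P) : IsReduced (End P) := by
  refine ⟨fun f ⟨m, hm⟩ => ?_⟩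
  obtain ⟨a, rfl⟩ := h f
  have hpow : a ^ m • (1 : End P) = 0 := by rw [← hm, ← one_pow m, ← smul_pow]; rfl
  rcases smul_eq_zero.mp hpow with ha | hone
  · rw [eq_zero_of_pow_eq_zero ha, zero_smul]
  · show a • (1 : End P) = 0
    rw [hone, smul_zero]

end Transport

namespace IsWeightFn

variable {K} {C : Type*} [Category C] [Preadditive C] [Linear K C]
  {σ : C ≌ C} {D : Cᵒᵖ ⥤ C} {wt : C → ℤ}

theorem apply_eq_of_iso (hwt : IsWeightFn K C σ D wt) {M N : C} (hM : Indec M) (e : M ≅ N) :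
    wt M = wt N := by
  have hN := hM.of_iso e
  by_contra hne
  rcases lt_or_gt_of_ne hne with h | h
  · exact hN.1 (.of_mono_eq_zero e.inv (hwt.hom_lt N M hN hM h e.inv))
  · exact hM.1 (.of_mono_eq_zero e.hom (hwt.hom_lt M N hM hN h e.hom))

theorem apply_shiftZ (hwt : IsWeightFn K C σ D wt) (n : ℤ) {M : C} (hM : Indec M) :
    wt (shiftZ σ n M) = wt M + n := by
  have step (m : ℤ) : wt (shiftZ σ (m + 1) M) = wt (shiftZ σ m M) + 1 := by
    obtain ⟨e⟩ := shiftZ_succ σ m M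
    rw [hwt.apply_eq_of_iso (hM.shiftZ σ _) e, hwt.shift _ (hM.shiftZ σ m)]
  induction n using Int.induction_on with
  | zero => exact (add_zero _).symm
  | succ n ih => rw [step, ih, add_assoc]
  | pred n ih =>
    have := step (-n - 1)
    rw [sub_add_cancel] at this
    omega

theorem apply_eq_zero_of_selfDual (hwt : IsWeightFn K C σ D wt) {P : C} (hP : Indec P)
    (hsd : SelfDual D P) : wt P = 0 := by
  obtain ⟨e⟩ := hsd
  have := hwt.dual P hP
  rw [hwt.apply_eq_of_iso (hP.of_iso e.symm) e] at this
  omega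

theorem orthodoxCanonical (hwt : IsWeightFn K C σ D wt) : OrthodoxCanonical K C σ D := by
  refine ⟨fun P P' hP hsd hP' hsd' i hi => ?_, fun P P' hP hsd hP' hsd' hPP' => ?_,
    fun P hP _ => hwt.end_scalar P hP⟩
  · refine hwt.hom_lt P _ hP (hP'.shiftZ σ i) ?_
    rw [hwt.apply_shiftZ i hP', hwt.apply_eq_zero_of_selfDual hP hsd,
      hwt.apply_eq_zero_of_selfDual hP' hsd']
    omega
  · refine hwt.hom_eq P P' hP hP' hPP' ?_
    rw [hwt.apply_eq_zero_of_selfDual hP hsd, hwt.apply_eq_zero_of_selfDual hP' hsd']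

end IsWeightFn

section SelfDualShift

variable {C : Type*} [Category C] [Preadditive C] {σ : C ≌ C} {D : Cᵒᵖ ⥤ C} {n : ℤ} {M : C}

variable (σ D) in
def IsSelfDualShift (n : ℤ) (M : C) : Prop :=
  ∃ P : C, Indec P ∧ SelfDual D P ∧ Nonempty (shiftZ σ n P ≅ M)

theorem IsSelfDualShift.functor_obj (h : IsSelfDualShift σ D n M) :
    IsSelfDualShift σ D (n + 1) (σ.functor.obj M) := by
  obtain ⟨P, hP, hsd, ⟨e⟩⟩ := h
  obtain ⟨s⟩ := shiftZ_succ σ n P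
  exact ⟨P, hP, hsd, ⟨s ≪≫ σ.functor.mapIso e⟩⟩

theorem IsSelfDualShift.dual
    (hD : ∀ M : C, Nonempty (D.obj (op (σ.functor.obj M)) ≅ σ.inverse.obj (D.obj (op M))))
    (h : IsSelfDualShift σ D n M) : IsSelfDualShift σ D (-n) (D.obj (op M)) := by
  obtain ⟨P, hP, ⟨d⟩, ⟨e⟩⟩ := h
  obtain ⟨s⟩ := dual_shiftZ hD n P
  obtain ⟨s'⟩ := shiftZ_congr σ (-n) d
  exact ⟨P, hP, ⟨d⟩, ⟨s'.symm ≪≫ s.symm ≪≫ (D.mapIso e.op).symm⟩⟩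

variable (σ D) in
open Classical in
def selfDualShiftIndex (M : C) : ℤ :=
  if h : ∃ n, IsSelfDualShift σ D n M then h.choose else 0

end SelfDualShift

namespace IsHumorous

variable {K} {C : Type*} [Category C] [Preadditive C] [Linear K C] [HasFiniteBiproducts C]
  {σ : C ≌ C} {D : Cᵒᵖ ⥤ C} {M : C}

theorem isSelfDualShift_unique (hC : IsHumorous K C σ D) {m n : ℤ}
    (hm : IsSelfDualShift σ D m M) (hn : IsSelfDualShift σ D n M) : m = n := by
  obtain ⟨P, hP, hsdP, ⟨e⟩⟩ := hm
  obtain ⟨Q, hQ, hsdQ, ⟨e'⟩⟩ := hn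
  obtain ⟨f⟩ := shiftZ_iso_shiftZ σ (e ≪≫ e'.symm)
  obtain ⟨g⟩ := hC.selfDualUnique Q P hQ hP hsdQ hsdP ⟨n - m, ⟨f.symm⟩⟩
  by_contra hne
  exact hC.shiftFree Q hQ (n - m) (sub_ne_zero.mpr (Ne.symm hne)) ⟨f.symm ≪≫ g.symm⟩

theorem exists_isSelfDualShift (hC : IsHumorous K C σ D) (hM : Indec M) :
    ∃ n, IsSelfDualShift σ D n M := by
  obtain ⟨k, reps, hreps, horb⟩ := hC.orbitFin
  obtain ⟨i, n, e⟩ := horb M hM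
  exact ⟨n, reps i, (hreps i).1, (hreps i).2, e⟩

theorem selfDualShiftIndex_eq (hC : IsHumorous K C σ D) {n : ℤ}
    (h : IsSelfDualShift σ D n M) : selfDualShiftIndex σ D M = n := by
  have hex : ∃ n, IsSelfDualShift σ D n M := ⟨n, h⟩
  rw [selfDualShiftIndex, dif_pos hex]
  exact hC.isSelfDualShift_unique hex.choose_spec h

theorem isWeightFn_selfDualShiftIndex (hC : IsHumorous K C σ D)
    (h : OrthodoxCanonical K C σ D) : IsWeightFn K C σ D (selfDualShiftIndex σ D) := by
  obtain ⟨hneg, hnoniso, hscalar⟩ := h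
  refine ⟨fun M hM => ?_, fun M hM => ?_, fun M N hM hN hlt => ?_,
    fun M N hM hN hMN heq => ?_, fun M hM f => ?_⟩
  all_goals obtain ⟨n, hn⟩ := hC.exists_isSelfDualShift hM
  · rw [hC.selfDualShiftIndex_eq (hn.dual hC.dualShift), hC.selfDualShiftIndex_eq hn]
  · rw [hC.selfDualShiftIndex_eq hn.functor_obj, hC.selfDualShiftIndex_eq hn]
  · obtain ⟨m, hm⟩ := hC.exists_isSelfDualShift hN
    rw [hC.selfDualShiftIndex_eq hn, hC.selfDualShiftIndex_eq hm] at hlt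
    obtain ⟨P, hP, hsd, ⟨e⟩⟩ := hn
    obtain ⟨P', hP', hsd', ⟨e'⟩⟩ := hm
    exact eq_zero_of_shiftZ σ e e' (hneg P P' hP hsd hP' hsd' (m - n) (by omega))
  · obtain ⟨m, hm⟩ := hC.exists_isSelfDualShift hN
    rw [hC.selfDualShiftIndex_eq hn, hC.selfDualShiftIndex_eq hm] at heq
    subst m
    obtain ⟨P, hP, hsd, ⟨e⟩⟩ := hn
    obtain ⟨P', hP', hsd', ⟨e'⟩⟩ := hm
    refine eq_zero_of_shiftZ σ e e' ?_
    rw [sub_self]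
    refine hnoniso P P' hP hsd hP' hsd' fun ⟨g⟩ => hMN ?_
    obtain ⟨g'⟩ := shiftZ_congr σ n g
    exact ⟨e.symm ≪≫ g' ≪≫ e'⟩
  · -- `σ` need not be `K`-linear, so scalars cannot be transported along it; reducedness can.
    obtain ⟨P, hP, hsd, ⟨e⟩⟩ := hn
    have := isReduced_end_of_forall_eq_smul_id (hscalar P hP hsd)
    have : IsReduced (End M) :=
      isReduced_of_injective ((endMulEquivShiftZ σ n P).trans e.conj).symm
        (MulEquiv.injective _)
    obtain ⟨a, ha⟩ := hC.endLocal M hM f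
    exact ⟨a, sub_eq_zero.mp ha.eq_zero⟩

end IsHumorous

variable {C : Type u} [Category.{v} C] [Preadditive C] [CategoryTheory.Linear K C]
  [HasFiniteBiproducts C]

/-- The orthodox basis of a humorous category is canonical
for the induced pre-canonical structure if and only if the category is mixed. -/
theorem orthodox_canonical_iff_mixed (σ : C ≌ C) (D : Cᵒᵖ ⥤ C)
    (hC : IsHumorous K C σ D) :
    OrthodoxCanonical K C σ D ↔ Mixed K C σ D :=
  ⟨fun h => ⟨_, hC.isWeightFn_selfDualShiftIndex h⟩, fun ⟨_, hwt⟩ => hwt.orthodoxCanonical⟩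

end
end
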